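/- arXiv:1706.09066 — 5 statements merged into one kernel-verified Lean document; each statement's English description precedes it below -/
import Mathlib

section
/- Let ℓ ≥ 3 be an integer and let G be a digraph. For all vertices u,u_1,u_2 ∈ V(G), all integers ℓ_1,ℓ_2 with min{ℓ_1,ℓ_2} ≥ 1 and ℓ_1+ℓ_2 = ℓ, and every integer q with 0 ≤ q ≤ ℓ−1, let R(u,u_1,u_2,ℓ_1,ℓ_2,q) ⊆ 𝒮(u,u_1,u_2,ℓ_1,ℓ_2) be a subfamily that q-represents 𝒮(u,u_1,u_2,ℓ_1,ℓ_2). If G contains a good spindle, then there exist vertices u,u_1,u_2,v of G, integers ℓ_1,ℓ_2 with min{ℓ_1,ℓ_2} ≥ 1 and ℓ_1+ℓ_2 = ℓ, an integer q with 0 ≤ q ≤ ℓ−1, a set S ∈ R(u,u_1,u_2,ℓ_1,ℓ_2,q), a (u_1,v)-path P_1^v, and a (u_2,v)-path P_2^v such that V(P_1^v) ∩ V(P_2^v) = {v} and S ∩ (V(P_1^v) ∪ V(P_2^v)) = {u_1,u_2}. -/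
/-- `p` is a directed path: a nonempty list of pairwise distinct vertices in which
consecutive vertices are joined by arcs of the digraph with arc relation `A`. -/
def IsPath {V : Type*} (A : V → V → Prop) (p : List V) : Prop :=
  p ≠ [] ∧ p.Nodup ∧ p.Chain' A

/-- `p` is a directed `(u,v)`-path. -/
def IsPathFT {V : Type*} (A : V → V → Prop) (u v : V) (p : List V) : Prop :=
  IsPath A p ∧ p.head? = some u ∧ p.getLast? = some v

/-- The vertex set of a path, as a set. -/
def vset {V : Type*} (p : List V) : Set V := {x | x ∈ p}

/-- The digraph with arc relation `A` contains a subdivision of an `(l1,l2)`-spindle: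
two internally vertex-disjoint `(u,v)`-paths of lengths (numbers of arcs) at least
`l1` and at least `l2`, respectively. -/
def ContainsSpindle2 {V : Type*} (A : V → V → Prop) (l1 l2 : ℕ) : Prop :=
  ∃ u v p1 p2, IsPathFT A u v p1 ∧ IsPathFT A u v p2 ∧
    l1 + 1 ≤ p1.length ∧ l2 + 1 ≤ p2.length ∧ p1 ≠ p2 ∧
    ∀ x, x ∈ p1 → x ∈ p2 → x = u ∨ x = v

/-- `F'` `q`-represents `F` (with respect to the uniform matroid of rank `p + q`):
`F'` is a subfamily of `F` and for every `q`-element set `B` which is disjoint from some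
member of `F`, `B` is also disjoint from some member of `F'`. -/
def Represents {V : Type*} [DecidableEq V] (q : ℕ) (F' F : Set (Finset V)) : Prop :=
  F' ⊆ F ∧ ∀ B : Finset V, B.card = q →
    (∃ S ∈ F, S ∩ B = ∅) → ∃ S ∈ F', S ∩ B = ∅

/-- The family `𝒮(u,u1,u2,l1,l2)`: all vertex sets `X` of cardinality `l1 + l2 - 1`
such that the subdigraph induced by `X` contains a `(u,u1)`-path on `l1` vertices and
a `(u,u2)`-path on `l2` vertices meeting only at `u`. -/
def SpindleFam {V : Type*} (A : V → V → Prop) (u u1 u2 : V) (l1 l2 : ℕ) :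
    Set (Finset V) :=
  {X | X.card = l1 + l2 - 1 ∧ ∃ p1 p2,
    IsPathFT A u u1 p1 ∧ p1.length = l1 ∧ (∀ x ∈ p1, x ∈ X) ∧
    IsPathFT A u u2 p2 ∧ p2.length = l2 ∧ (∀ x ∈ p2, x ∈ X) ∧
    ∀ x, x ∈ p1 → x ∈ p2 → x = u}

/-!
Take a good spindle with as few vertices as possible, formed by `(u,v)`-paths `Q₁` and `Q₂`,
and cut them after their first `l₁` and `l₂` vertices, at `u₁` and `u₂`, with `l₁ + l₂ = l`.
The two initial segments form a member of `𝒮(u,u₁,u₂,l₁,l₂)` avoiding the set `B` of the last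
vertices of the two tails (at most `l - 1` of them), so the representative family contains a
member `S` avoiding `B` too. Let `h₁`, `h₂` be the last vertices of `S` on the tails. If `S` met a
tail other than at its first vertex, rerouting the two paths of `S` through `h₁` and `h₂` would give
a good spindle with fewer vertices; it is still long enough because `B` lies beyond `h₁` and `h₂`.
Hence `S` meets the tails exactly in `{u₁, u₂}`.
-/

section

variable {V : Type*} {A : V → V → Prop}

namespace List

theorem exists_eq_append_cons_of_lt {L : List V} {n : ℕ} (h : n < L.length) :
    ∃ xs y ys, L = xs ++ y :: ys ∧ xs.length = n :=
  ⟨L.take n, L[n], L.drop (n + 1), by rw [← List.drop_eq_getElem_cons, List.take_append_drop],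
    by simp; omega⟩

theorem exists_last_split {P : V → Prop} {L : List V} (h : ∃ x ∈ L, P x) :
    ∃ xs x ys, L = xs ++ x :: ys ∧ P x ∧ ∀ y ∈ ys, ¬ P y := by
  induction L using List.reverseRecOn with
  | nil => simp at h
  | append_singleton L a ih =>
    by_cases ha : P a
    · exact ⟨L, a, [], rfl, ha, by simp⟩
    · obtain ⟨x, hx, hPx⟩ := h
      have hxL : x ∈ L := by
        rcases List.mem_append.1 hx with hx | hx
        · exact hx
        · exact absurd (List.mem_singleton.1 hx ▸ hPx) ha
      obtain ⟨xs, y, ys, rfl, hPy, hys⟩ := ih ⟨x, hxL, hPx⟩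
      refine ⟨xs, y, ys ++ [a], by simp, hPy, ?_⟩
      simp only [List.mem_append, List.mem_singleton]
      rintro z (hz | rfl)
      exacts [hys z hz, ha]

theorem exists_append_cons_append_cons_of_mem {s : List V} {x y : V} (hx : x ∈ s) (hy : y ∈ s)
    (hxy : x ≠ y) :
    (∃ a c d, s = a ++ x :: (c ++ y :: d)) ∨ ∃ a c d, s = a ++ y :: (c ++ x :: d) := by
  obtain ⟨a, d, rfl⟩ := List.append_of_mem hy
  rcases List.mem_append.1 hx with hx | hx
  · obtain ⟨a, c, rfl⟩ := List.append_of_mem hx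
    exact Or.inl ⟨a, c, d, by simp⟩
  · obtain ⟨c, d, rfl⟩ := List.append_of_mem ((List.mem_cons.1 hx).resolve_left hxy)
    exact Or.inr ⟨a, c, d, rfl⟩

theorem mem_or_mem_of_mem_append_cons {xs ys ws : List V} {x y : V}
    (hx : x ∈ xs ++ y :: ws) : x ∈ xs ++ y :: ys ∨ x ∈ ws := by
  simp only [List.mem_append, List.mem_cons] at hx ⊢
  tauto

theorem length_le_of_notMem_drop {L c d : List V} {x : V} {n : ℕ} (hL : L = c ++ x :: d)
    (hx : x ∉ L.drop n) : L.length ≤ n + d.length := by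
  subst hL
  by_contra! hlt
  apply hx
  rw [List.drop_append_of_le_length (by simp at hlt; omega)]
  simp

theorem card_toFinset_union_add_one [DecidableEq V] {s₁ s₂ : List V} {u : V}
    (h₁ : s₁.Nodup) (h₂ : s₂.Nodup) (hu₁ : u ∈ s₁) (hu₂ : u ∈ s₂)
    (h : ∀ x ∈ s₁, x ∈ s₂ → x = u) :
    (s₁.toFinset ∪ s₂.toFinset).card + 1 = s₁.length + s₂.length := by
  have hinter : s₁.toFinset ∩ s₂.toFinset = {u} := by
    ext x
    simp only [Finset.mem_inter, List.mem_toFinset, Finset.mem_singleton]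
    exact ⟨fun hx => h x hx.1 hx.2, by rintro rfl; exact ⟨hu₁, hu₂⟩⟩
  rw [← List.toFinset_card_of_nodup h₁, ← List.toFinset_card_of_nodup h₂,
    ← Finset.card_union_add_card_inter, hinter, Finset.card_singleton]

end List

namespace IsPathFT

variable {u v : V} {xs ys : List V} {y : V}

theorem head_mem {p : List V} (h : IsPathFT A u v p) : u ∈ p :=
  List.mem_of_mem_head? h.2.1

theorem last_mem {p : List V} (h : IsPathFT A u v p) : v ∈ p :=
  List.mem_of_getLast? h.2.2

theorem last_mem_right (h : IsPathFT A u v (xs ++ ys)) (hys : ys ≠ []) : v ∈ ys :=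
  List.mem_of_getLast? (h.2.2 ▸ (List.getLast?_append_of_ne_nil xs hys).symm)

theorem notMem_right {x : V} (h : IsPathFT A u v (xs ++ ys)) (hx : x ∈ xs) : x ∉ ys :=
  List.disjoint_of_nodup_append h.1.2.1 hx

theorem left_eq_nil_of_head_mem (h : IsPathFT A u v (xs ++ ys)) (hu : u ∈ ys) : xs = [] := by
  cases xs with
  | nil => rfl
  | cons a as =>
    have ha : a = u := by simpa using h.2.1
    exact absurd hu (h.notMem_right (ha ▸ List.mem_cons_self))

theorem ne_of_two_le_length {p : List V} (h : IsPathFT A u v p) (hp : 2 ≤ p.length) : u ≠ v := by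
  rintro rfl
  obtain ⟨a, b, rest, rfl⟩ : ∃ a b rest, p = a :: b :: rest := by
    match p, hp with
    | a :: b :: rest, _ => exact ⟨a, b, rest, rfl⟩
  have hu : a = u := by simpa using h.2.1
  exact h.notMem_right (xs := [a]) (hu ▸ List.mem_singleton_self a)
    (h.last_mem_right (xs := [a]) (List.cons_ne_nil b rest))

theorem two_le_length {p : List V} (h : IsPathFT A u v p) (huv : u ≠ v) : 2 ≤ p.length := by
  match p, h with
  | [], h => exact absurd h.1.1 (by simp)
  | [a], h => exact absurd ((Option.some.inj h.2.1).symm.trans (Option.some.inj h.2.2)) huv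
  | _ :: _ :: _, _ => simp

theorem takeUntil (h : IsPathFT A u v (xs ++ y :: ys)) : IsPathFT A u y (xs ++ [y]) := by
  obtain ⟨⟨-, hnd, hch⟩, hhd, -⟩ := h
  refine ⟨⟨by simp, hnd.sublist (by simp), (List.isChain_split.1 hch).1⟩, ?_, by simp⟩
  rw [← hhd]
  cases xs <;> rfl

theorem dropUntil (h : IsPathFT A u v (xs ++ y :: ys)) : IsPathFT A y v (y :: ys) := by
  obtain ⟨⟨-, hnd, hch⟩, -, hlast⟩ := h
  refine ⟨⟨by simp, hnd.sublist (List.sublist_append_right _ _), (List.isChain_split.1 hch).2⟩,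
    rfl, ?_⟩
  rw [← hlast, List.getLast?_append_of_ne_nil _ (List.cons_ne_nil _ _)]

theorem splice {u' v' : V} {zs ws : List V} (h₁ : IsPathFT A u v (xs ++ y :: ys))
    (h₂ : IsPathFT A u' v' (zs ++ y :: ws)) (hdisj : ∀ x ∈ xs, x ∉ ws) :
    IsPathFT A u v' (xs ++ y :: ws) := by
  have hp := h₁.takeUntil
  have hs := h₂.dropUntil
  refine ⟨⟨by simp, ?_, List.isChain_split.2 ⟨hp.1.2.2, hs.1.2.2⟩⟩, ?_, ?_⟩
  · refine List.nodup_append.2 ⟨(List.nodup_append.1 hp.1.2.1).1, hs.1.2.1, ?_⟩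
    rintro a ha b hb rfl
    rcases List.mem_cons.1 hb with rfl | hb
    · exact hp.notMem_right ha List.mem_cons_self
    · exact hdisj a ha hb
  · rw [← hp.2.1]
    cases xs <;> rfl
  · rw [← hs.2.2, List.getLast?_append_of_ne_nil _ (List.cons_ne_nil _ _)]

end IsPathFT

/-- A good spindle: two internally disjoint `(u,v)`-paths with `l + 2` vertices, i.e. at least
`l` arcs, in total. -/
structure IsLongSpindle (A : V → V → Prop) (l : ℕ) (u v : V) (P₁ P₂ : List V) : Prop where
  path₁ : IsPathFT A u v P₁
  path₂ : IsPathFT A u v P₂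
  ne : u ≠ v
  inter : ∀ x ∈ P₁, x ∈ P₂ → x = u ∨ x = v
  length_add : l + 2 ≤ P₁.length + P₂.length

theorem IsLongSpindle.symm {l : ℕ} {u v : V} {P₁ P₂ : List V} (h : IsLongSpindle A l u v P₁ P₂) :
    IsLongSpindle A l u v P₂ P₁ :=
  ⟨h.path₂, h.path₁, h.ne, fun x h₂ h₁ => h.inter x h₁ h₂, by have := h.length_add; omega⟩

theorem ContainsSpindle2.exists_isLongSpindle {l₁ l₂ : ℕ} (h : ContainsSpindle2 A l₁ l₂)
    (hl₁ : 1 ≤ l₁) : ∃ u v P₁ P₂, IsLongSpindle A (l₁ + l₂) u v P₁ P₂ := by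
  obtain ⟨u, v, P₁, P₂, hP₁, hP₂, hlen₁, hlen₂, -, hinter⟩ := h
  exact ⟨u, v, P₁, P₂, hP₁, hP₂, hP₁.ne_of_two_le_length (by omega), hinter, by omega⟩

theorem exists_isLongSpindle_minimal {l : ℕ} (h : ∃ u v P₁ P₂, IsLongSpindle A l u v P₁ P₂) :
    ∃ u v Q₁ Q₂, IsLongSpindle A l u v Q₁ Q₂ ∧ ∀ u' v' P₁ P₂, IsLongSpindle A l u' v' P₁ P₂ →
      Q₁.length + Q₂.length ≤ P₁.length + P₂.length := by
  classical
  have hex : ∃ n u v P₁ P₂, IsLongSpindle A l u v P₁ P₂ ∧ P₁.length + P₂.length = n := by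
    obtain ⟨u, v, P₁, P₂, hP⟩ := h
    exact ⟨_, u, v, P₁, P₂, hP, rfl⟩
  obtain ⟨u, v, Q₁, Q₂, hQ, hn⟩ := Nat.find_spec hex
  exact ⟨u, v, Q₁, Q₂, hQ, fun u' v' P₁ P₂ hP => hn ▸ Nat.find_min' hex ⟨u', v', P₁, P₂, hP, rfl⟩⟩

section Shortcut

variable {l : ℕ} {u v w₁ w₂ z₁ z₂ h₁ h₂ : V} {s₁ s₂ t₁ b₁ t₂ b₂ : List V}
  {S : Finset V}

theorem exists_shorter_of_cross
    (hs₁ : IsPathFT A u w₁ s₁) (hs₂ : IsPathFT A u w₂ s₂) (hs : ∀ x ∈ s₁, x ∈ s₂ → x = u)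
    (hs₁S : ∀ x ∈ s₁, x ∈ S) (hs₂S : ∀ x ∈ s₂, x ∈ S) (hvS : v ∉ S)
    (hl : s₁.length + s₂.length ≤ l)
    (hT₁ : IsPathFT A z₁ v (t₁ ++ h₁ :: b₁)) (hT₂ : IsPathFT A z₂ v (t₂ ++ h₂ :: b₂))
    (hT : ∀ x ∈ t₁ ++ h₁ :: b₁, x ∈ t₂ ++ h₂ :: b₂ → x = v)
    (hb₁ : ∀ x ∈ b₁, x ∉ S) (hb₂ : ∀ x ∈ b₂, x ∉ S) (hh₁ : h₁ ∈ s₁) (hh₂ : h₂ ∈ s₂)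
    (hcount : l ≤ b₁.length + b₂.length) (ht : t₁ ≠ [] ∨ t₂ ≠ []) :
    ∃ P₁ P₂, IsLongSpindle A l u v P₁ P₂ ∧
      P₁.length + P₂.length + 2 < l + (t₁ ++ h₁ :: b₁).length + (t₂ ++ h₂ :: b₂).length := by
  obtain ⟨q₁, r₁, rfl⟩ := List.append_of_mem hh₁
  obtain ⟨q₂, r₂, rfl⟩ := List.append_of_mem hh₂
  refine ⟨q₁ ++ h₁ :: b₁, q₂ ++ h₂ :: b₂, ⟨?_, ?_, ?_, ?_, ?_⟩, ?_⟩
  · exact hs₁.splice hT₁ fun x hx hxb => hb₁ x hxb (hs₁S x (List.mem_append_left _ hx))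
  · exact hs₂.splice hT₂ fun x hx hxb => hb₂ x hxb (hs₂S x (List.mem_append_left _ hx))
  · exact fun huv => hvS (huv ▸ hs₁S u hs₁.head_mem)
  · intro x hx₁ hx₂
    rcases List.mem_or_mem_of_mem_append_cons (ys := r₁) hx₁ with hx₁ | hx₁ <;>
      rcases List.mem_or_mem_of_mem_append_cons (ys := r₂) hx₂ with hx₂ | hx₂
    · exact Or.inl (hs x hx₁ hx₂)
    · exact absurd (hs₁S x hx₁) (hb₂ x hx₂)
    · exact absurd (hs₂S x hx₂) (hb₁ x hx₁)
    · exact Or.inr (hT x (by simp [hx₁]) (by simp [hx₂]))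
  · simp only [List.length_append, List.length_cons]
    omega
  · have : 1 ≤ t₁.length + t₂.length := by
      rcases ht with h | h <;> have := List.length_pos_iff.2 h <;> omega
    simp only [List.length_append, List.length_cons] at hl ⊢
    omega

theorem exists_shorter_of_nested {w zX zY hX hY : V} {a c d xa xb ya yb : List V}
    (hs : IsPathFT A u w (a ++ hX :: (c ++ hY :: d)))
    (hsS : ∀ x ∈ a ++ hX :: (c ++ hY :: d), x ∈ S) (hvS : v ∉ S)
    (hl : (a ++ hX :: (c ++ hY :: d)).length < l)
    (hTX : IsPathFT A zX v (xa ++ hX :: xb)) (hTY : IsPathFT A zY v (ya ++ hY :: yb))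
    (hT : ∀ x ∈ xa ++ hX :: xb, x ∈ ya ++ hY :: yb → x = v)
    (hxb : ∀ x ∈ xb, x ∉ S) (hyb : ∀ x ∈ yb, x ∉ S)
    (hcount : l ≤ xb.length + yb.length) (ht : xa ≠ [] ∨ ya ≠ []) :
    ∃ u' P₁ P₂, IsLongSpindle A l u' v P₁ P₂ ∧
      P₁.length + P₂.length + 2 < l + (xa ++ hX :: xb).length + (ya ++ hY :: yb).length := by
  have hsS' : ∀ x ∈ (hX :: c) ++ hY :: d, x ∈ S := fun x hx => hsS x (by simp_all)
  have hP₁ : IsPathFT A hX v ((hX :: c) ++ hY :: yb) :=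
    IsPathFT.splice (hs.dropUntil (xs := a)) hTY fun x hx hxb =>
      hyb x hxb (hsS' x (List.mem_append_left _ hx))
  refine ⟨hX, (hX :: c) ++ hY :: yb, hX :: xb, ⟨hP₁, hTX.dropUntil, ?_, ?_, ?_⟩, ?_⟩
  · exact fun h => hvS (h ▸ hsS' hX List.mem_cons_self)
  · intro x hx₁ hx₂
    rcases List.mem_cons.1 hx₂ with rfl | hx₂
    · exact Or.inl rfl
    · rcases List.mem_or_mem_of_mem_append_cons (ys := d) hx₁ with hx₁ | hx₁
      · exact absurd (hsS' x hx₁) (hxb x hx₂)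
      · exact Or.inr (hT x (by simp [hx₂]) (by simp [hx₁]))
  · simp only [List.length_append, List.length_cons]
    omega
  · have : 1 ≤ xa.length + ya.length := by
      rcases ht with h | h <;> have := List.length_pos_iff.2 h <;> omega
    simp only [List.length_append, List.length_cons] at hl ⊢
    omega

theorem exists_shorter_of_mem_same {w : V} {s : List V}
    (hs : IsPathFT A u w s) (hsS : ∀ x ∈ s, x ∈ S) (hvS : v ∉ S) (hl : s.length < l)
    (hT₁ : IsPathFT A z₁ v (t₁ ++ h₁ :: b₁)) (hT₂ : IsPathFT A z₂ v (t₂ ++ h₂ :: b₂))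
    (hT : ∀ x ∈ t₁ ++ h₁ :: b₁, x ∈ t₂ ++ h₂ :: b₂ → x = v)
    (hb₁ : ∀ x ∈ b₁, x ∉ S) (hb₂ : ∀ x ∈ b₂, x ∉ S) (hh₁ : h₁ ∈ s) (hh₂ : h₂ ∈ s)
    (hcount : l ≤ b₁.length + b₂.length) (ht : t₁ ≠ [] ∨ t₂ ≠ []) :
    ∃ u' P₁ P₂, IsLongSpindle A l u' v P₁ P₂ ∧
      P₁.length + P₂.length + 2 < l + (t₁ ++ h₁ :: b₁).length + (t₂ ++ h₂ :: b₂).length := by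
  have hne : h₁ ≠ h₂ := fun h =>
    hvS (hT h₁ (by simp) (h ▸ by simp) ▸ hsS h₁ hh₁)
  rcases List.exists_append_cons_append_cons_of_mem hh₁ hh₂ hne with
    ⟨a, c, d, rfl⟩ | ⟨a, c, d, rfl⟩
  · exact exists_shorter_of_nested hs hsS hvS hl hT₁ hT₂ hT hb₁ hb₂ hcount ht
  · obtain ⟨u', P₁, P₂, hP, hlt⟩ := exists_shorter_of_nested hs hsS hvS hl hT₂ hT₁
      (fun x hx₂ hx₁ => hT x hx₁ hx₂) hb₂ hb₁ (by omega) ht.symm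
    exact ⟨u', P₁, P₂, hP, by omega⟩

/-- If `h₁`, `h₂` lie on different paths `sᵢ`, the new spindle runs from `u` along these paths
to `h₁`, `h₂` and on along `b₁`, `b₂`; if they lie on the same path, it starts at the earlier of
the two. Either way the vertices of `t₁`, `t₂` are saved, while `b₁`, `b₂` keep it long. -/
theorem exists_shorter_isLongSpindle
    (hs₁ : IsPathFT A u w₁ s₁) (hs₂ : IsPathFT A u w₂ s₂) (hs : ∀ x ∈ s₁, x ∈ s₂ → x = u)
    (hS : ∀ x, x ∈ S ↔ x ∈ s₁ ∨ x ∈ s₂) (hvS : v ∉ S) (hl : s₁.length + s₂.length = l)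
    (hT₁ : IsPathFT A z₁ v (t₁ ++ h₁ :: b₁)) (hT₂ : IsPathFT A z₂ v (t₂ ++ h₂ :: b₂))
    (hT : ∀ x ∈ t₁ ++ h₁ :: b₁, x ∈ t₂ ++ h₂ :: b₂ → x = v)
    (hb₁ : ∀ x ∈ b₁, x ∉ S) (hb₂ : ∀ x ∈ b₂, x ∉ S) (hh₁ : h₁ ∈ S) (hh₂ : h₂ ∈ S)
    (hcount : l ≤ b₁.length + b₂.length) (ht : t₁ ≠ [] ∨ t₂ ≠ []) :
    ∃ u' P₁ P₂, IsLongSpindle A l u' v P₁ P₂ ∧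
      P₁.length + P₂.length + 2 < l + (t₁ ++ h₁ :: b₁).length + (t₂ ++ h₂ :: b₂).length := by
  have hs₁S : ∀ x ∈ s₁, x ∈ S := fun x hx => (hS x).2 (Or.inl hx)
  have hs₂S : ∀ x ∈ s₂, x ∈ S := fun x hx => (hS x).2 (Or.inr hx)
  have hlen₁ := List.length_pos_of_mem hs₁.head_mem
  have hlen₂ := List.length_pos_of_mem hs₂.head_mem
  rcases (hS h₁).1 hh₁ with hh₁ | hh₁ <;> rcases (hS h₂).1 hh₂ with hh₂ | hh₂
  · exact exists_shorter_of_mem_same hs₁ hs₁S hvS (by omega) hT₁ hT₂ hT hb₁ hb₂ hh₁ hh₂ hcount ht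
  · exact ⟨u, exists_shorter_of_cross hs₁ hs₂ hs hs₁S hs₂S hvS hl.le hT₁ hT₂ hT hb₁ hb₂ hh₁ hh₂
      hcount ht⟩
  · exact ⟨u, exists_shorter_of_cross hs₂ hs₁ (fun x hx₂ hx₁ => hs x hx₁ hx₂) hs₂S hs₁S hvS
      (by omega) hT₁ hT₂ hT hb₁ hb₂ hh₁ hh₂ hcount ht⟩
  · exact exists_shorter_of_mem_same hs₂ hs₂S hvS (by omega) hT₁ hT₂ hT hb₁ hb₂ hh₁ hh₂ hcount ht

end Shortcut

theorem vset_inter_vset_eq_singleton {p₁ p₂ : List V} {v : V} (h₁ : v ∈ p₁) (h₂ : v ∈ p₂)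
    (h : ∀ x ∈ p₁, x ∈ p₂ → x = v) : vset p₁ ∩ vset p₂ = {v} :=
  Set.ext fun x => ⟨fun hx => h x hx.1 hx.2, by rintro rfl; exact ⟨h₁, h₂⟩⟩

theorem coe_inter_vset_cons_eq {S : Finset V} {a₁ a₂ : V} {b₁ b₂ : List V} (h₁ : a₁ ∈ S)
    (h₂ : a₂ ∈ S) (hb₁ : ∀ x ∈ b₁, x ∉ S) (hb₂ : ∀ x ∈ b₂, x ∉ S) :
    (↑S : Set V) ∩ (vset (a₁ :: b₁) ∪ vset (a₂ :: b₂)) = {a₁, a₂} := by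
  ext x
  simp only [vset, Set.mem_inter_iff, Finset.mem_coe, Set.mem_union, Set.mem_ofPred_eq,
    List.mem_cons, Set.mem_insert_iff, Set.mem_singleton_iff]
  constructor
  · rintro ⟨hx, (h | h) | (h | h)⟩
    exacts [Or.inl h, absurd hx (hb₁ x h), Or.inr h, absurd hx (hb₂ x h)]
  · rintro (rfl | rfl)
    exacts [⟨h₁, Or.inl (Or.inl rfl)⟩, ⟨h₂, Or.inr (Or.inl rfl)⟩]

section Representation

variable [DecidableEq V]

/-- `B` consists of the last `k₁` vertices of the first tail and the last `k₂` of the second,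
where `k₁ + k₂ = min (|ys₁| + |ys₂|) l`; both parts contain `v`, so `|B| ≤ l - 1`. -/
theorem exists_blocking_suffixes {l : ℕ} {v a₁ a₂ : V} {ys₁ ys₂ : List V} (hl : 2 ≤ l)
    (hv₁ : ys₁.getLast? = some v) (hv₂ : ys₂.getLast? = some v) :
    ∃ B : Finset V, B.card ≤ l - 1 ∧ v ∈ B ∧ (∀ x ∈ B, x ∈ ys₁ ∨ x ∈ ys₂) ∧
      ∀ t₁ h₁ b₁ t₂ h₂ b₂, a₁ :: ys₁ = t₁ ++ h₁ :: b₁ → a₂ :: ys₂ = t₂ ++ h₂ :: b₂ →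
        h₁ ∉ B → h₂ ∉ B → (t₁ = [] ∧ t₂ = []) ∨ l ≤ b₁.length + b₂.length := by
  have hlen₁ := List.length_pos_of_mem (List.mem_of_getLast? hv₁)
  have hlen₂ := List.length_pos_of_mem (List.mem_of_getLast? hv₂)
  set k₁ := min ys₁.length (l - 1)
  set k₂ := min ys₂.length (l - k₁)
  set D₁ := ys₁.drop (ys₁.length - k₁)
  set D₂ := ys₂.drop (ys₂.length - k₂)
  have hvD₁ : v ∈ D₁ := List.mem_of_getLast? (by rw [List.getLast?_drop, if_neg (by omega), hv₁])
  have hvD₂ : v ∈ D₂ := List.mem_of_getLast? (by rw [List.getLast?_drop, if_neg (by omega), hv₂])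
  refine ⟨D₁.toFinset ∪ D₂.toFinset, ?_, by simp [hvD₁], ?_, ?_⟩
  · have hunion := Finset.card_union_add_card_inter D₁.toFinset D₂.toFinset
    have hinter : 1 ≤ (D₁.toFinset ∩ D₂.toFinset).card :=
      Finset.card_pos.2 ⟨v, by simp [hvD₁, hvD₂]⟩
    have hD₁ : D₁.toFinset.card ≤ k₁ := (List.toFinset_card_le D₁).trans (by simp [D₁]; omega)
    have hD₂ : D₂.toFinset.card ≤ k₂ := (List.toFinset_card_le D₂).trans (by simp [D₂]; omega)
    omega
  · intro x hx
    simp only [Finset.mem_union, List.mem_toFinset] at hx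
    exact hx.imp List.mem_of_mem_drop List.mem_of_mem_drop
  · intro t₁ h₁ b₁ t₂ h₂ b₂ hT₁ hT₂ hh₁ hh₂
    have hb₁ := List.length_le_of_notMem_drop hT₁ (n := ys₁.length - k₁ + 1)
      (fun h => hh₁ (Finset.mem_union_left _ (List.mem_toFinset.2 h)))
    have hb₂ := List.length_le_of_notMem_drop hT₂ (n := ys₂.length - k₂ + 1)
      (fun h => hh₂ (Finset.mem_union_right _ (List.mem_toFinset.2 h)))
    have ht₁ := congrArg List.length hT₁
    have ht₂ := congrArg List.length hT₂
    simp only [List.length_cons, List.length_append] at hb₁ hb₂ ht₁ ht₂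
    by_cases hk : l ≤ k₁ + k₂
    · exact Or.inr (by omega)
    · exact Or.inl ⟨List.length_eq_zero_iff.1 (by omega), List.length_eq_zero_iff.1 (by omega)⟩

theorem exists_paths_of_mem_spindleFam {X : Finset V} {u u₁ u₂ : V} {l₁ l₂ : ℕ}
    (hX : X ∈ SpindleFam A u u₁ u₂ l₁ l₂) :
    ∃ s₁ s₂, IsPathFT A u u₁ s₁ ∧ IsPathFT A u u₂ s₂ ∧ (∀ x ∈ s₁, x ∈ s₂ → x = u) ∧
      s₁.length + s₂.length = l₁ + l₂ ∧ ∀ x, x ∈ X ↔ x ∈ s₁ ∨ x ∈ s₂ := by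
  obtain ⟨hcard, s₁, s₂, hs₁, rfl, hs₁X, hs₂, rfl, hs₂X, hs⟩ := hX
  have hsub : s₁.toFinset ∪ s₂.toFinset ⊆ X := by
    intro x hx
    simp only [Finset.mem_union, List.mem_toFinset] at hx
    exact hx.elim (hs₁X x) (hs₂X x)
  have hunion := List.card_toFinset_union_add_one hs₁.1.2.1 hs₂.1.2.1 hs₁.head_mem hs₂.head_mem hs
  have heq := Finset.eq_of_subset_of_card_le hsub (by omega)
  exact ⟨s₁, s₂, hs₁, hs₂, hs, rfl, fun x => by simp [← heq]⟩

theorem exists_mem_represents_inter_tails {F : ℕ → Set (Finset V)}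
    {X : Finset V} {l l₁ l₂ : ℕ} {u u₁ u₂ v : V} {ys₁ ys₂ : List V}
    (hl : l₁ + l₂ = l) (h2l : 2 ≤ l) (hX : X ∈ SpindleFam A u u₁ u₂ l₁ l₂)
    (hXys : ∀ x ∈ X, x ∉ ys₁ ∧ x ∉ ys₂)
    (hT₁ : IsPathFT A u₁ v (u₁ :: ys₁)) (hT₂ : IsPathFT A u₂ v (u₂ :: ys₂))
    (hys₁ : ys₁ ≠ []) (hys₂ : ys₂ ≠ []) (hT : ∀ x ∈ u₁ :: ys₁, x ∈ u₂ :: ys₂ → x = v)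
    (hF : ∀ q ≤ l - 1, Represents q (F q) (SpindleFam A u u₁ u₂ l₁ l₂))
    (hmin : ∀ u' P₁ P₂, IsLongSpindle A l u' v P₁ P₂ →
      l + (u₁ :: ys₁).length + (u₂ :: ys₂).length ≤ P₁.length + P₂.length + 2) :
    ∃ q ≤ l - 1, ∃ S ∈ F q, (↑S : Set V) ∩ (vset (u₁ :: ys₁) ∪ vset (u₂ :: ys₂)) = {u₁, u₂} := by
  obtain ⟨B, hBcard, hvB, hBys, hblock⟩ := exists_blocking_suffixes (a₁ := u₁) (a₂ := u₂) h2l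
    ((List.getLast?_append_of_ne_nil [u₁] hys₁).symm.trans hT₁.2.2)
    ((List.getLast?_append_of_ne_nil [u₂] hys₂).symm.trans hT₂.2.2)
  have hXB : X ∩ B = ∅ := Finset.eq_empty_of_forall_notMem fun x hx => by
    rw [Finset.mem_inter] at hx
    exact (hBys x hx.2).elim (hXys x hx.1).1 (hXys x hx.1).2
  obtain ⟨hsub, hrep⟩ := hF B.card hBcard
  obtain ⟨S, hSF, hSB⟩ := hrep B rfl ⟨X, hX, hXB⟩
  have hSB' : ∀ x ∈ S, x ∉ B := fun x hxS hxB =>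
    Finset.notMem_empty x (hSB ▸ Finset.mem_inter.2 ⟨hxS, hxB⟩)
  obtain ⟨s₁, s₂, hs₁, hs₂, hs, hlen, hS⟩ := exists_paths_of_mem_spindleFam (hsub hSF)
  obtain ⟨t₁, h₁, b₁, hT₁eq, hh₁, hb₁⟩ :=
    List.exists_last_split (P := (· ∈ S)) ⟨u₁, List.mem_cons_self, (hS u₁).2 (.inl hs₁.last_mem)⟩
  obtain ⟨t₂, h₂, b₂, hT₂eq, hh₂, hb₂⟩ :=
    List.exists_last_split (P := (· ∈ S)) ⟨u₂, List.mem_cons_self, (hS u₂).2 (.inr hs₂.last_mem)⟩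
  by_cases ht : t₁ = [] ∧ t₂ = []
  · obtain ⟨rfl, rfl⟩ := ht
    simp only [List.nil_append, List.cons.injEq] at hT₁eq hT₂eq
    obtain ⟨rfl, rfl⟩ := hT₁eq
    obtain ⟨rfl, rfl⟩ := hT₂eq
    exact ⟨B.card, hBcard, S, hSF, coe_inter_vset_cons_eq hh₁ hh₂ hb₁ hb₂⟩
  · have hcount :=
      (hblock t₁ h₁ b₁ t₂ h₂ b₂ hT₁eq hT₂eq (hSB' h₁ hh₁) (hSB' h₂ hh₂)).resolve_left ht
    rw [hT₁eq] at hT₁ hT hmin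
    rw [hT₂eq] at hT₂ hT hmin
    obtain ⟨u', P₁, P₂, hP, hlt⟩ := exists_shorter_isLongSpindle hs₁ hs₂ hs hS
      (fun h => hSB' v h hvB) (hlen.trans hl) hT₁ hT₂ hT hb₁ hb₂ hh₁ hh₂ hcount (not_and_or.1 ht)
    exact absurd (hmin u' P₁ P₂ hP) (by omega)

end Representation

namespace IsLongSpindle

variable {l : ℕ} {u v u₁ u₂ : V} {xs₁ ys₁ xs₂ ys₂ : List V}

theorem exists_cut {Q₁ Q₂ : List V} (hQ : IsLongSpindle A l u v Q₁ Q₂) (hl : 2 ≤ l) :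
    ∃ xs₁ u₁ ys₁ xs₂ u₂ ys₂, Q₁ = xs₁ ++ u₁ :: ys₁ ∧ Q₂ = xs₂ ++ u₂ :: ys₂ ∧
      xs₁.length + xs₂.length + 2 = l ∧ ys₁ ≠ [] ∧ ys₂ ≠ [] := by
  have h₁ := hQ.path₁.two_le_length hQ.ne
  have h₂ := hQ.path₂.two_le_length hQ.ne
  have h := hQ.length_add
  obtain ⟨xs₁, u₁, ys₁, rfl, hxs₁⟩ :=
    List.exists_eq_append_cons_of_lt (L := Q₁) (n := min (Q₁.length - 2) (l - 2)) (by omega)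
  obtain ⟨xs₂, u₂, ys₂, rfl, hxs₂⟩ :=
    List.exists_eq_append_cons_of_lt (L := Q₂) (n := l - 2 - xs₁.length) (by omega)
  simp only [List.length_append, List.length_cons] at h₁ h₂ h hxs₁
  refine ⟨xs₁, u₁, ys₁, xs₂, u₂, ys₂, rfl, rfl, by omega, ?_, ?_⟩ <;>
    rintro rfl <;> simp only [List.length_nil] at * <;> omega

theorem notMem_tails (hQ : IsLongSpindle A l u v (xs₁ ++ u₁ :: ys₁) (xs₂ ++ u₂ :: ys₂))
    (hys₁ : ys₁ ≠ []) {x : V} (hx : x ∈ xs₁ ++ [u₁]) : x ∉ ys₁ ∧ x ∉ ys₂ := by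
  have hQ₁ : IsPathFT A u v ((xs₁ ++ [u₁]) ++ ys₁) := by simpa using hQ.path₁
  have hQ₂ : IsPathFT A u v ((xs₂ ++ [u₂]) ++ ys₂) := by simpa using hQ.path₂
  refine ⟨hQ₁.notMem_right hx, fun hx₂ => ?_⟩
  rcases hQ.inter x (by simp at hx ⊢; tauto) (by simp [hx₂]) with rfl | rfl
  · exact hQ₂.notMem_right hQ.path₂.takeUntil.head_mem hx₂
  · exact hQ₁.notMem_right hx (hQ₁.last_mem_right hys₁)

theorem takeUntil_inter (hQ : IsLongSpindle A l u v (xs₁ ++ u₁ :: ys₁) (xs₂ ++ u₂ :: ys₂))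
    (hys₁ : ys₁ ≠ []) : ∀ x ∈ xs₁ ++ [u₁], x ∈ xs₂ ++ [u₂] → x = u := by
  intro x hx₁ hx₂
  refine (hQ.inter x (by simp at hx₁ ⊢; tauto) (by simp at hx₂ ⊢; tauto)).resolve_right ?_
  rintro rfl
  exact (hQ.notMem_tails hys₁ hx₁).1 (hQ.path₁.dropUntil.last_mem_right (xs := [u₁]) hys₁)

theorem dropUntil_inter (hQ : IsLongSpindle A l u v (xs₁ ++ u₁ :: ys₁) (xs₂ ++ u₂ :: ys₂))
    (hxs : 1 ≤ xs₁.length + xs₂.length) : ∀ x ∈ u₁ :: ys₁, x ∈ u₂ :: ys₂ → x = v := by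
  intro x hx₁ hx₂
  refine (hQ.inter x (List.mem_append_right _ hx₁) (List.mem_append_right _ hx₂)).resolve_left ?_
  rintro rfl
  obtain rfl := hQ.path₁.left_eq_nil_of_head_mem hx₁
  obtain rfl := hQ.path₂.left_eq_nil_of_head_mem hx₂
  simp at hxs

variable [DecidableEq V]

theorem mem_spindleFam (hQ : IsLongSpindle A l u v (xs₁ ++ u₁ :: ys₁) (xs₂ ++ u₂ :: ys₂))
    (hys₁ : ys₁ ≠ []) :
    (xs₁ ++ [u₁]).toFinset ∪ (xs₂ ++ [u₂]).toFinset ∈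
      SpindleFam A u u₁ u₂ (xs₁.length + 1) (xs₂.length + 1) := by
  have hp₁ := hQ.path₁.takeUntil
  have hp₂ := hQ.path₂.takeUntil
  have hinter := hQ.takeUntil_inter hys₁
  refine ⟨?_, _, _, hp₁, by simp, fun x hx => Finset.mem_union_left _ (List.mem_toFinset.2 hx), hp₂,
    by simp, fun x hx => Finset.mem_union_right _ (List.mem_toFinset.2 hx), hinter⟩
  have := List.card_toFinset_union_add_one hp₁.1.2.1 hp₂.1.2.1 hp₁.head_mem hp₂.head_mem hinter
  simp only [List.length_append, List.length_singleton] at this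
  omega

theorem notMem_tails_of_mem_union
    (hQ : IsLongSpindle A l u v (xs₁ ++ u₁ :: ys₁) (xs₂ ++ u₂ :: ys₂))
    (hys₁ : ys₁ ≠ []) (hys₂ : ys₂ ≠ []) :
    ∀ x ∈ (xs₁ ++ [u₁]).toFinset ∪ (xs₂ ++ [u₂]).toFinset, x ∉ ys₁ ∧ x ∉ ys₂ := by
  intro x hx
  rcases Finset.mem_union.1 hx with hx | hx
  · exact hQ.notMem_tails hys₁ (List.mem_toFinset.1 hx)
  · exact (hQ.symm.notMem_tails hys₂ (List.mem_toFinset.1 hx)).symm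

end IsLongSpindle

end

theorem stmt1_general {V : Type*} [DecidableEq V] (A : V → V → Prop)
    (l : ℕ) (hl : 3 ≤ l)
    (R : V → V → V → ℕ → ℕ → ℕ → Set (Finset V))
    (hR : ∀ u u1 u2 l1 l2 q, 1 ≤ l1 → 1 ≤ l2 → l1 + l2 = l → q ≤ l - 1 →
      Represents q (R u u1 u2 l1 l2 q) (SpindleFam A u u1 u2 l1 l2))
    (hG : ∃ l1 l2, 1 ≤ l1 ∧ 1 ≤ l2 ∧ l1 + l2 = l ∧ ContainsSpindle2 A l1 l2) :
    ∃ (u u1 u2 v : V) (l1 l2 q : ℕ), 1 ≤ l1 ∧ 1 ≤ l2 ∧ l1 + l2 = l ∧ q ≤ l - 1 ∧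
      ∃ S ∈ R u u1 u2 l1 l2 q, ∃ p1v p2v,
        IsPathFT A u1 v p1v ∧ IsPathFT A u2 v p2v ∧
        vset p1v ∩ vset p2v = {v} ∧
        (↑S : Set V) ∩ (vset p1v ∪ vset p2v) = {u1, u2} := by
  obtain ⟨l₁, l₂, hl₁, -, hl₁₂, hspindle⟩ := hG
  obtain ⟨u, v, Q₁, Q₂, hQ, hmin⟩ :=
    exists_isLongSpindle_minimal (hl₁₂ ▸ hspindle.exists_isLongSpindle hl₁)
  obtain ⟨xs₁, u₁, ys₁, xs₂, u₂, ys₂, rfl, rfl, hlen, hys₁, hys₂⟩ := hQ.exists_cut (by omega)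
  have hT₁ := hQ.path₁.dropUntil
  have hT₂ := hQ.path₂.dropUntil
  have hT := hQ.dropUntil_inter (by omega)
  have hmin' : ∀ u' P₁ P₂, IsLongSpindle A l u' v P₁ P₂ →
      l + (u₁ :: ys₁).length + (u₂ :: ys₂).length ≤ P₁.length + P₂.length + 2 := by
    intro u' P₁ P₂ hP
    have := hmin u' v P₁ P₂ hP
    simp only [List.length_append, List.length_cons] at this ⊢
    omega
  obtain ⟨q, hq, S, hS, hST⟩ := exists_mem_represents_inter_tails (l := l)
    (F := R u u₁ u₂ (xs₁.length + 1) (xs₂.length + 1)) (by omega) (by omega)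
    (hQ.mem_spindleFam hys₁) (hQ.notMem_tails_of_mem_union hys₁ hys₂) hT₁ hT₂ hys₁ hys₂ hT
    (fun q hq => hR _ _ _ _ _ q (by omega) (by omega) (by omega) hq) hmin'
  exact ⟨u, u₁, u₂, v, _, _, q, by omega, by omega, by omega, hq, S, hS, u₁ :: ys₁, u₂ :: ys₂,
    hT₁, hT₂, vset_inter_vset_eq_singleton hT₁.last_mem hT₂.last_mem hT, hST⟩

theorem stmt1 {V : Type*} [DecidableEq V] (A : V → V → Prop)
    (harc : ∀ a b, A a b → a ≠ b) (l : ℕ) (hl : 3 ≤ l)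
    (R : V → V → V → ℕ → ℕ → ℕ → Set (Finset V))
    (hR : ∀ u u1 u2 l1 l2 q, 1 ≤ l1 → 1 ≤ l2 → l1 + l2 = l → q ≤ l - 1 →
      Represents q (R u u1 u2 l1 l2 q) (SpindleFam A u u1 u2 l1 l2))
    (hG : ∃ l1 l2, 1 ≤ l1 ∧ 1 ≤ l2 ∧ l1 + l2 = l ∧ ContainsSpindle2 A l1 l2) :
    ∃ (u u1 u2 v : V) (l1 l2 q : ℕ), 1 ≤ l1 ∧ 1 ≤ l2 ∧ l1 + l2 = l ∧ q ≤ l - 1 ∧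
      ∃ S ∈ R u u1 u2 l1 l2 q, ∃ p1v p2v,
        IsPathFT A u1 v p1v ∧ IsPathFT A u2 v p2v ∧
        vset p1v ∩ vset p2v = {v} ∧
        (↑S : Set V) ∩ (vset p1v ∪ vset p2v) = {u1, u2} :=
  stmt1_general A l hl R hR hG
end

section
/- Let G be a digraph and let X,Y ⊆ V(G) be such that no arc of G has its head in X∖Y and no arc of G has its tail in Y∖X, and let G' be the associated auxiliary undirected graph. Then, for every nonnegative integer k, the digraph G contains k pairwise vertex-disjoint nontrivial directed paths from X to Y if and only if G' has a matching of size k + |V(G)∖(X∪Y)|. -/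
/-- Base (oriented) relation of the auxiliary undirected graph `G'` associated with the
digraph `A` and the sets `X, Y`.  Vertices: `Sum.inl v` is the original vertex `v`, and
`Sum.inr v` is the copy `v'` of `v` (used only for `v ∉ X ∪ Y`).
Edges: `{v, v'}` for every `v ∉ X ∪ Y`; for every arc `(u,v)`, the edge `{u, v}` if
`v ∈ X ∪ Y` and the edge `{u, v'}` otherwise. -/
def auxRel {V : Type*} [DecidableEq V] (A : V → V → Prop) (X Y : Finset V) :
    V ⊕ V → V ⊕ V → Prop
  | .inl u, .inl w => A u w ∧ w ∈ X ∪ Y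
  | .inl u, .inr w => (A u w ∧ w ∉ X ∪ Y) ∨ (u = w ∧ u ∉ X ∪ Y)
  | .inr _, _ => False

/-- Adjacency (symmetrized) in the auxiliary undirected graph `G'`. -/
def auxAdj {V : Type*} [DecidableEq V] (A : V → V → Prop) (X Y : Finset V)
    (a b : V ⊕ V) : Prop :=
  auxRel A X Y a b ∨ auxRel A X Y b a

/-- `M` is a matching of the undirected graph with adjacency `Adj`: a set of edges
(each recorded once, as an ordered pair of distinct adjacent vertices) that are
pairwise disjoint. -/
def IsMatching {W : Type*} (Adj : W → W → Prop) (M : Finset (W × W)) : Prop :=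
  (∀ e ∈ M, Adj e.1 e.2 ∧ e.1 ≠ e.2) ∧
  ∀ e ∈ M, ∀ f ∈ M, e ≠ f →
    e.1 ≠ f.1 ∧ e.1 ≠ f.2 ∧ e.2 ≠ f.1 ∧ e.2 ≠ f.2

/-!
An arc `(u, v)` of `G` becomes the edge `{u, v}` or `{u, v'}` of `G'`, so every vertex of `G`
has one vertex of `G'` for leaving it and one for entering it, and the two coincide exactly on
`X ∪ Y`. Cut each of `k` disjoint `X`–`Y` paths at its first vertex in `Y` after the start (the
arc hypotheses keep the interior out of `X ∪ Y`). Matching every start and every inner vertex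
along its arc, or to its own copy when it is an inner vertex off the paths, gives `k + n` edges,
where `n = |V(G) ∖ (X ∪ Y)|`.

Conversely, orient a matching `M` of size `k + n` along the arcs. The arcs it uses form
disjoint directed paths and cycles, in which a vertex of `X ∪ Y` is entered or left but not
both. Take a vertex `x ∈ X ∪ Y` that these arcs do not join to another vertex of `X ∪ Y`. If
`x` is not entered, the trail forward from `x` ends at a vertex `z` left unsaturated by `M`;
otherwise the trail backward from `x` starts at a vertex `w` whose copy `w'` is unsaturated.
Distinct `x` give distinct unsaturated vertices, and `M` leaves only `|X ∪ Y| - 2k` of them, so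
at least `2k` vertices of `X ∪ Y` are joined to another one, at least `k` of them as starts;
the trails leaving these starts are the paths.
-/

open Relation

namespace Relation

variable {α : Type*} {r : α → α → Prop} {a b c : α}

theorem ReflTransGen.eq_of_forall_not_rel_left (h : ReflTransGen r a b) (ha : ∀ c, ¬ r a c) :
    a = b := by
  rcases h.cases_head with rfl | ⟨c, hac, -⟩
  · rfl
  · exact absurd hac (ha c)

theorem ReflTransGen.eq_of_forall_not_rel_right (h : ReflTransGen r a b) (hb : ∀ c, ¬ r c b) :
    a = b := by
  rcases h.cases_tail with rfl | ⟨c, -, hcb⟩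
  · rfl
  · exact absurd hcb (hb c)

theorem ReflTransGen.total_of_injective (hr : ∀ a b c, r a c → r b c → a = b)
    (hac : ReflTransGen r a c) (hbc : ReflTransGen r b c) :
    ReflTransGen r a b ∨ ReflTransGen r b a := by
  induction hac generalizing b with
  | refl => exact Or.inr hbc
  | tail had hdc ih =>
    rcases hbc.cases_tail with rfl | ⟨d', hbd', hd'c⟩
    · exact Or.inl (had.tail hdc)
    · exact ih (hr _ _ _ hd'c hdc ▸ hbd')

theorem ReflTransGen.total_of_functional (hr : ∀ a b c, r a b → r a c → b = c)
    (hab : ReflTransGen r a b) (hac : ReflTransGen r a c) :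
    ReflTransGen r b c ∨ ReflTransGen r c b := by
  have := total_of_injective (r := Function.swap r) (fun a b c hac hbc => hr c a b hac hbc)
    (reflTransGen_swap.2 hab) (reflTransGen_swap.2 hac)
  simpa only [reflTransGen_swap, or_comm] using this

/-- Otherwise a choice of successors is an injective, hence surjective, self-map of the
vertices reachable from `a`, and `a` gets a predecessor. -/
theorem exists_reflTransGen_forall_not_rel [Finite α] (hr : ∀ a b c, r a c → r b c → a = b)
    (ha : ∀ b, ¬ r b a) : ∃ z, ReflTransGen r a z ∧ ∀ c, ¬ r z c := by
  by_contra! h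
  choose! f hf using h
  let g : {z // ReflTransGen r a z} → {z // ReflTransGen r a z} :=
    fun z => ⟨f z, z.2.tail (hf z z.2)⟩
  have hg : Function.Injective g := fun z z' hzz' => by
    have hfz : f z = f z' := congrArg Subtype.val hzz'
    exact Subtype.ext (hr _ _ _ (hf z z.2) (hfz ▸ hf z' z'.2))
  obtain ⟨z, hz⟩ := Finite.injective_iff_surjective.1 hg ⟨a, .refl⟩
  have hfz : f z = a := congrArg Subtype.val hz
  exact ha z (by simpa [hfz] using hf z z.2)

theorem exists_reflTransGen_forall_not_rel_swap [Finite α] (hr : ∀ a b c, r a b → r a c → b = c)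
    (ha : ∀ b, ¬ r a b) : ∃ z, ReflTransGen r z a ∧ ∀ c, ¬ r c z := by
  obtain ⟨z, hz, hz'⟩ := exists_reflTransGen_forall_not_rel (r := Function.swap r)
    (fun a b c hac hbc => hr c a b hac hbc) ha
  exact ⟨z, reflTransGen_swap.1 hz, hz'⟩

end Relation

namespace List

variable {α : Type*} {r : α → α → Prop}

theorem IsChain.exists_mem_rel_of_mem {x a : α} :
    ∀ {l : List α}, IsChain r (x :: l) → a ∈ l → ∃ y ∈ x :: l, r y a
  | b :: l, h, ha => by
    rcases mem_cons.1 ha with rfl | ha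
    · exact ⟨x, mem_cons_self, h.rel⟩
    · obtain ⟨y, hy, hya⟩ := (isChain_cons_cons.1 h).2.exists_mem_rel_of_mem ha
      exact ⟨y, mem_cons_of_mem _ hy, hya⟩

theorem IsChain.nodup_of_injective (hr : ∀ a b c, r a c → r b c → a = b) :
    ∀ {a : α} {l : List α}, IsChain r (a :: l) → (∀ y ∈ a :: l, ¬ r y a) → (a :: l).Nodup
  | a, [], _, _ => nodup_singleton a
  | a, b :: l, h, ha => by
    have hal : a ∉ b :: l := fun hmem =>
      let ⟨y, hy, hya⟩ := h.exists_mem_rel_of_mem hmem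
      ha y hy hya
    refine nodup_cons.2 ⟨hal, (isChain_cons_cons.1 h).2.nodup_of_injective hr ?_⟩
    exact fun y hy hyb => hal (hr _ _ _ hyb h.rel ▸ hy)

theorem IsChain.reflTransGen_of_mem {a b : α} {l : List α} (h : IsChain r (a :: l))
    (hb : b ∈ a :: l) : ReflTransGen r a b :=
  h.induction (ReflTransGen r a ·) _ (fun _ _ hxy hx => hx.tail hxy)
    (fun _ => .refl) b hb

theorem mem_tail_of_pair_infix {a b : α} {l : List α} (h : [a, b] <:+: l) : b ∈ l.tail := by
  obtain ⟨s, t, rfl⟩ := h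
  cases s <;> simp

theorem Nodup.eq_of_pair_infix {a b c : α} {l : List α} (hl : l.Nodup) (ha : [a, c] <:+: l)
    (hb : [b, c] <:+: l) : a = b := by
  induction l with
  | nil => simp at ha
  | cons x l ih =>
    obtain ⟨hx, hl⟩ := nodup_cons.1 hl
    rw [infix_cons_iff] at ha hb
    rcases ha with ha | ha <;> rcases hb with hb | hb
    · exact (cons_prefix_cons.1 ha).1.trans (cons_prefix_cons.1 hb).1.symm
    · obtain ⟨l', rfl⟩ := (cons_prefix_cons.1 ha).2
      exact ((nodup_cons.1 hl).1 (mem_tail_of_pair_infix hb)).elim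
    · obtain ⟨l', rfl⟩ := (cons_prefix_cons.1 hb).2
      exact ((nodup_cons.1 hl).1 (mem_tail_of_pair_infix ha)).elim
    · exact ih hl ha hb

theorem exists_pair_infix_append_singleton {a z : α} :
    ∀ {l : List α}, a ∈ l → ∃ b, [a, b] <:+: l ++ [z]
  | x :: l, ha => by
    rcases mem_cons.1 ha with rfl | ha
    · cases l with
      | nil => exact ⟨z, infix_refl _⟩
      | cons y l => exact ⟨y, (prefix_append _ _).isInfix⟩
    · obtain ⟨b, hb⟩ := exists_pair_infix_append_singleton (z := z) ha
      exact ⟨b, infix_cons_iff.2 (Or.inr hb)⟩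

theorem exists_append_singleton_prefix (p : α → Prop) :
    ∀ {l : List α}, (∃ v ∈ l, p v) → ∃ l₁ z, l₁ ++ [z] <+: l ∧ p z ∧ ∀ v ∈ l₁, ¬ p v
  | x :: l, ⟨v, hv, hpv⟩ => by
    by_cases hx : p x
    · exact ⟨[], x, by simp, hx, by simp⟩
    · have hvl : v ∈ l := (mem_cons.1 hv).resolve_left fun h => hx (h ▸ hpv)
      obtain ⟨l₁, z, hpre, hz, hl₁⟩ := exists_append_singleton_prefix p ⟨v, hvl, hpv⟩
      exact ⟨x :: l₁, z, cons_prefix_cons.2 ⟨rfl, hpre⟩, hz, by simpa [hx] using hl₁⟩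

end List

namespace IsMatching

variable {W : Type*} {Adj : W → W → Prop} {M : Finset (W × W)} {e f : W × W}

theorem eq_of_fst_eq (hM : IsMatching Adj M) (he : e ∈ M) (hf : f ∈ M) (h : e.1 = f.1) :
    e = f := by
  by_contra hef
  exact (hM.2 e he f hf hef).1 h

theorem eq_of_snd_eq (hM : IsMatching Adj M) (he : e ∈ M) (hf : f ∈ M) (h : e.2 = f.2) :
    e = f := by
  by_contra hef
  exact (hM.2 e he f hf hef).2.2.2 h

theorem fst_ne_snd (hM : IsMatching Adj M) (he : e ∈ M) (hf : f ∈ M) : e.1 ≠ f.2 := by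
  by_cases hef : e = f
  · exact hef ▸ (hM.1 e he).2
  · exact (hM.2 e he f hf hef).2.1

theorem exists_oriented {r : W → W → Prop} (hM : IsMatching (fun a b => r a b ∨ r b a) M) :
    ∃ M', IsMatching (fun a b => r a b ∨ r b a) M' ∧ (∀ e ∈ M', r e.1 e.2) ∧
      M'.card = M.card := by
  classical
  let o : W × W → W × W := fun e => if r e.1 e.2 then e else e.swap
  have ho : ∀ e, o e = e ∨ o e = e.swap := fun e => by
    by_cases h : r e.1 e.2 <;> simp [o, h]
  have hro : ∀ e ∈ M, r (o e).1 (o e).2 := fun e he => by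
    by_cases h : r e.1 e.2
    · simp [o, h]
    · simpa [o, h] using (hM.1 e he).1.resolve_left h
  have hdisj : ∀ e ∈ M, ∀ f ∈ M, e ≠ f → (o e).1 ≠ (o f).1 ∧ (o e).1 ≠ (o f).2 ∧
      (o e).2 ≠ (o f).1 ∧ (o e).2 ≠ (o f).2 := by
    intro e he f hf hef
    have := hM.2 e he f hf hef
    rcases ho e with h1 | h1 <;> rcases ho f with h2 | h2 <;>
      simp only [h1, h2, Prod.fst_swap, Prod.snd_swap] <;> tauto
  have hinj : Set.InjOn o M := fun e he f hf h =>
    by_contra fun hef => (hdisj e he f hf hef).1 (congrArg Prod.fst h)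
  refine ⟨M.image o, ⟨Finset.forall_mem_image.2 fun e he => ⟨Or.inl (hro e he), ?_⟩,
    Finset.forall_mem_image.2 fun e he => Finset.forall_mem_image.2 fun f hf hef =>
      hdisj e he f hf fun h => hef (h ▸ rfl)⟩,
    Finset.forall_mem_image.2 hro, Finset.card_image_of_injOn hinj⟩
  rcases ho e with h | h <;> rw [h]
  · exact (hM.1 e he).2
  · exact (hM.1 e he).2.symm

end IsMatching

section Matching

variable {W : Type*} [DecidableEq W] {Adj : W → W → Prop} {M : Finset (W × W)}

def saturated (M : Finset (W × W)) : Finset W := M.biUnion fun e => {e.1, e.2}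

theorem mem_saturated {w : W} : w ∈ saturated M ↔ ∃ e ∈ M, e.1 = w ∨ e.2 = w := by
  simp [saturated, eq_comm]

theorem IsMatching.card_saturated (hM : IsMatching Adj M) : (saturated M).card = 2 * M.card := by
  rw [saturated, Finset.card_biUnion, Finset.sum_const_nat fun e he => ?_, mul_comm]
  · exact Finset.card_pair (hM.1 e he).2
  · intro e he f hf hef
    obtain ⟨h1, h2, h3, h4⟩ := hM.2 e he f hf hef
    simp only [Function.onFun, Finset.disjoint_insert_left, Finset.disjoint_insert_right,
      Finset.disjoint_singleton, Finset.mem_insert, Finset.mem_singleton]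
    tauto

theorem isMatching_image_of_injOn {V : Type*} {D : Finset V} {g σ : V → W}
    (hg : Function.Injective g) (hσ : Set.InjOn σ D) (hadj : ∀ v ∈ D, Adj (g v) (σ v))
    (hne : ∀ a ∈ D, ∀ b ∈ D, g a ≠ σ b) : IsMatching Adj (D.image fun v => (g v, σ v)) := by
  refine ⟨Finset.forall_mem_image.2 fun v hv => ⟨hadj v hv, hne v hv v hv⟩,
    Finset.forall_mem_image.2 fun a ha => Finset.forall_mem_image.2 fun b hb hab => ?_⟩
  have hab : a ≠ b := fun h => hab (h ▸ rfl)
  exact ⟨hg.ne hab, hne a ha b hb, (hne b hb a ha).symm, fun h => hab (hσ ha hb h)⟩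

end Matching

section AuxGraph

variable {V : Type*} [DecidableEq V] {A : V → V → Prop} {X Y : Finset V}
  {M : Finset ((V ⊕ V) × (V ⊕ V))} {u v w : V}

/-- The vertex of `G'` at which the edges coming from arcs into `w` end. -/
def inPort (X Y : Finset V) (w : V) : V ⊕ V := if w ∈ X ∪ Y then .inl w else .inr w

theorem inPort_eq_inl_iff : inPort X Y w = .inl v ↔ w = v ∧ v ∈ X ∪ Y := by
  unfold inPort
  split_ifs with hw
  · exact ⟨fun h => ⟨Sum.inl_injective h, Sum.inl_injective h ▸ hw⟩, fun h => h.1 ▸ rfl⟩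
  · simp only [false_iff, not_and]
    exact fun h => h ▸ hw

theorem inPort_eq_inr_iff : inPort X Y w = .inr v ↔ w = v ∧ v ∉ X ∪ Y := by
  unfold inPort
  split_ifs with hw
  · simp only [false_iff, not_and, not_not]
    exact fun h => h ▸ hw
  · exact ⟨fun h => ⟨Sum.inr_injective h, Sum.inr_injective h ▸ hw⟩, fun h => h.1 ▸ rfl⟩

theorem inPort_injective : Function.Injective (inPort X Y) := by
  intro w w' h
  by_cases hw : w ∈ X ∪ Y
  · exact ((inPort_eq_inl_iff.1 (h.symm.trans (if_pos hw))).1).symm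
  · exact ((inPort_eq_inr_iff.1 (h.symm.trans (if_neg hw))).1).symm

theorem auxRel_inl_inPort (h : A u w) : auxRel A X Y (.inl u) (inPort X Y w) := by
  unfold inPort
  split_ifs with hw
  · exact ⟨h, hw⟩
  · exact Or.inl ⟨h, hw⟩

def matchingArc (A : V → V → Prop) (X Y : Finset V) (M : Finset ((V ⊕ V) × (V ⊕ V)))
    (u w : V) : Prop :=
  A u w ∧ (.inl u, inPort X Y w) ∈ M

theorem eq_arc_or_eq_copy (hor : ∀ e ∈ M, auxRel A X Y e.1 e.2) {e : (V ⊕ V) × (V ⊕ V)}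
    (he : e ∈ M) : (∃ u w, matchingArc A X Y M u w ∧ e = (.inl u, inPort X Y w)) ∨
      ∃ v ∉ X ∪ Y, e = (.inl v, .inr v) := by
  have h := hor e he
  obtain ⟨u | u, w | w⟩ := e
  · have hw : inPort X Y w = .inl w := inPort_eq_inl_iff.2 ⟨rfl, h.2⟩
    exact Or.inl ⟨u, w, ⟨h.1, hw ▸ he⟩, by rw [hw]⟩
  · rcases h with ⟨huw, hw⟩ | ⟨rfl, hu⟩
    · have hw' : inPort X Y w = .inr w := inPort_eq_inr_iff.2 ⟨rfl, hw⟩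
      exact Or.inl ⟨u, w, ⟨huw, hw' ▸ he⟩, by rw [hw']⟩
    · exact Or.inr ⟨u, hu, rfl⟩
  all_goals exact h.elim

theorem inl_mem_saturated (hor : ∀ e ∈ M, auxRel A X Y e.1 e.2) (h : .inl v ∈ saturated M) :
    (∃ w, matchingArc A X Y M v w) ∨ (v ∉ X ∪ Y ∧ (.inl v, .inr v) ∈ M) ∨
      (v ∈ X ∪ Y ∧ ∃ u, matchingArc A X Y M u v) := by
  obtain ⟨e, he, hv⟩ := mem_saturated.1 h
  rcases eq_arc_or_eq_copy hor he with ⟨u, w, huw, rfl⟩ | ⟨v', hv', rfl⟩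
  · rcases hv with hv | hv
    · exact Or.inl ⟨w, Sum.inl_injective hv ▸ huw⟩
    · obtain ⟨rfl, hw⟩ := inPort_eq_inl_iff.1 hv
      exact Or.inr (Or.inr ⟨hw, u, huw⟩)
  · simp only [Sum.inl.injEq, reduceCtorEq, or_false] at hv
    exact Or.inr (Or.inl (hv ▸ ⟨hv', he⟩))

theorem inr_mem_saturated (hor : ∀ e ∈ M, auxRel A X Y e.1 e.2) (h : .inr v ∈ saturated M) :
    v ∉ X ∪ Y ∧ ((∃ u, matchingArc A X Y M u v) ∨ (.inl v, .inr v) ∈ M) := by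
  obtain ⟨e, he, hv⟩ := mem_saturated.1 h
  rcases eq_arc_or_eq_copy hor he with ⟨u, w, huw, rfl⟩ | ⟨v', hv', rfl⟩
  · simp only [reduceCtorEq, false_or] at hv
    obtain ⟨rfl, hw⟩ := inPort_eq_inr_iff.1 hv
    exact ⟨hw, Or.inl ⟨u, huw⟩⟩
  · simp only [reduceCtorEq, Sum.inr.injEq, false_or] at hv
    exact hv ▸ ⟨hv', Or.inr he⟩

namespace IsMatching

variable {Adj : V ⊕ V → V ⊕ V → Prop}

theorem matchingArc_left_unique (hM : IsMatching Adj M) {u' : V}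
    (h : matchingArc A X Y M u w) (h' : matchingArc A X Y M u' w) : u = u' :=
  Sum.inl_injective (congrArg Prod.fst (hM.eq_of_snd_eq h.2 h'.2 rfl))

theorem matchingArc_right_unique (hM : IsMatching Adj M) {w' : V}
    (h : matchingArc A X Y M u w) (h' : matchingArc A X Y M u w') : w = w' :=
  inPort_injective (congrArg Prod.snd (hM.eq_of_fst_eq h.2 h'.2 rfl))

/-- A vertex of `X ∪ Y` has a single vertex in `G'`, so it cannot be entered and left. -/
theorem not_matchingArc_of_matchingArc (hM : IsMatching Adj M) (hv : v ∈ X ∪ Y)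
    (h : matchingArc A X Y M u v) : ¬ matchingArc A X Y M v w := fun h' =>
  hM.fst_ne_snd h'.2 h.2 (inPort_eq_inl_iff.2 ⟨rfl, hv⟩).symm

theorem not_matchingArc_from_of_copy_mem (harc : ∀ a b, A a b → a ≠ b) (hM : IsMatching Adj M)
    (hv : (.inl v, .inr v) ∈ M) : ¬ matchingArc A X Y M v w := fun h => by
  have := congrArg Prod.snd (hM.eq_of_fst_eq h.2 hv rfl)
  exact harc v w h.1 (inPort_eq_inr_iff.1 this).1.symm

theorem not_matchingArc_into_of_copy_mem (harc : ∀ a b, A a b → a ≠ b) (hM : IsMatching Adj M)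
    (hv : (.inl v, .inr v) ∈ M) : ¬ matchingArc A X Y M u v := fun h => by
  by_cases hvXY : v ∈ X ∪ Y
  · exact hM.fst_ne_snd hv h.2 (inPort_eq_inl_iff.2 ⟨rfl, hvXY⟩).symm
  · have := congrArg Prod.fst (hM.eq_of_snd_eq h.2 hv (inPort_eq_inr_iff.2 ⟨rfl, hvXY⟩))
    exact harc u v h.1 (Sum.inl_injective this)

end IsMatching

end AuxGraph

theorem exists_isPathFT_of_reflTransGen {V : Type*} {A R : V → V → Prop} {s t : V}
    (hRA : ∀ a b, R a b → A a b) (hR : ∀ a b c, R a c → R b c → a = b) (hs : ∀ u, ¬ R u s)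
    (hst : ReflTransGen R s t) :
    ∃ p, IsPathFT A s t p ∧ ∀ v ∈ p, ReflTransGen R s v := by
  obtain ⟨l, hl, hlast⟩ := List.exists_isChain_cons_of_relationReflTransGen hst
  refine ⟨s :: l, ⟨⟨List.cons_ne_nil _ _, hl.nodup_of_injective hR fun u _ => hs u,
    hl.imp fun a b => hRA a b⟩, rfl, ?_⟩, fun v hv => hl.reflTransGen_of_mem hv⟩
  rw [List.getLast?_eq_some_getLast (List.cons_ne_nil _ _), hlast]

section Linked

variable {V : Type*} [DecidableEq V] {A R : V → V → Prop} {X Y : Finset V} {s t x y : V}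

open Classical in
noncomputable def linkedStarts (R : V → V → Prop) (X Y : Finset V) : Finset V :=
  (X ∪ Y).filter fun s => ∃ t ∈ X ∪ Y, s ≠ t ∧ ReflTransGen R s t

open Classical in
noncomputable def linkedEnds (R : V → V → Prop) (X Y : Finset V) : Finset V :=
  (X ∪ Y).filter fun t => ∃ s ∈ X ∪ Y, s ≠ t ∧ ReflTransGen R s t

theorem mem_linkedStarts :
    s ∈ linkedStarts R X Y ↔ s ∈ X ∪ Y ∧ ∃ t ∈ X ∪ Y, s ≠ t ∧ ReflTransGen R s t := by
  classical exact Finset.mem_filter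

theorem mem_linkedEnds :
    t ∈ linkedEnds R X Y ↔ t ∈ X ∪ Y ∧ ∃ s ∈ X ∪ Y, s ≠ t ∧ ReflTransGen R s t := by
  classical exact Finset.mem_filter

theorem eq_of_not_mem_linked (hx : x ∈ (X ∪ Y) \ (linkedStarts R X Y ∪ linkedEnds R X Y))
    (hy : y ∈ X ∪ Y) (h : ReflTransGen R x y ∨ ReflTransGen R y x) : x = y := by
  obtain ⟨hxXY, hx⟩ := Finset.mem_sdiff.1 hx
  by_contra hne
  rcases h with h | h
  · exact hx (Finset.mem_union_left _ (mem_linkedStarts.2 ⟨hxXY, y, hy, hne, h⟩))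
  · exact hx (Finset.mem_union_right _ (mem_linkedEnds.2 ⟨hxXY, y, hy, Ne.symm hne, h⟩))

theorem forall_not_rel_of_mem_linkedStarts (hdeg : ∀ v ∈ X ∪ Y, ∀ u w, R u v → ¬ R v w)
    (hs : s ∈ linkedStarts R X Y) (u : V) : ¬ R u s := by
  obtain ⟨hsXY, t, -, hst, hreach⟩ := mem_linkedStarts.1 hs
  obtain ⟨c, hsc, -⟩ := hreach.cases_head.resolve_left hst
  exact fun hus => hdeg s hsXY u c hus hsc

theorem forall_not_rel_of_mem_linkedEnds (hdeg : ∀ v ∈ X ∪ Y, ∀ u w, R u v → ¬ R v w)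
    (ht : t ∈ linkedEnds R X Y) (c : V) : ¬ R t c := by
  obtain ⟨htXY, s, -, hst, hreach⟩ := mem_linkedEnds.1 ht
  obtain ⟨d, -, hdt⟩ := hreach.cases_tail.resolve_left (Ne.symm hst)
  exact hdeg t htXY d c hdt

theorem card_linkedEnds_le (hfun : ∀ a b c, R a b → R a c → b = c)
    (hdeg : ∀ v ∈ X ∪ Y, ∀ u w, R u v → ¬ R v w) :
    (linkedEnds R X Y).card ≤ (linkedStarts R X Y).card := by
  refine Finset.card_le_card_of_forall_subsingleton (fun t s => ReflTransGen R s t) ?_ ?_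
  · intro t ht
    obtain ⟨htXY, s, hsXY, hst, hreach⟩ := mem_linkedEnds.1 ht
    exact ⟨s, mem_linkedStarts.2 ⟨hsXY, t, htXY, hst, hreach⟩, hreach⟩
  · intro s _ t ⟨ht, hst⟩ t' ⟨ht', hst'⟩
    rcases hst.total_of_functional hfun hst' with h | h
    · exact h.eq_of_forall_not_rel_left (forall_not_rel_of_mem_linkedEnds hdeg ht)
    · exact (h.eq_of_forall_not_rel_left (forall_not_rel_of_mem_linkedEnds hdeg ht')).symm

theorem exists_disjoint_paths_of_le_card_linkedStarts (hX : ∀ a b, A a b → b ∈ X → b ∈ Y)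
    (hY : ∀ a b, A a b → a ∈ Y → a ∈ X) (hRA : ∀ a b, R a b → A a b)
    (hR : ∀ a b c, R a c → R b c → a = b) (hdeg : ∀ v ∈ X ∪ Y, ∀ u w, R u v → ¬ R v w)
    {k : ℕ} (hk : k ≤ (linkedStarts R X Y).card) :
    ∃ P : Fin k → List V,
      (∀ i, ∃ x y, x ∈ X ∧ y ∈ Y ∧ x ≠ y ∧ IsPathFT A x y (P i)) ∧
      (∀ i j, i ≠ j → ∀ v, v ∈ P i → v ∉ P j) := by
  have hstart := fun s => forall_not_rel_of_mem_linkedStarts (s := s) hdeg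
  have hpath : ∀ s : linkedStarts R X Y, ∃ p,
      (∃ x y, x ∈ X ∧ y ∈ Y ∧ x ≠ y ∧ IsPathFT A x y p) ∧ ∀ v ∈ p, ReflTransGen R s v := by
    rintro ⟨s, hs⟩
    obtain ⟨hsXY, t, htXY, hst, hreach⟩ := mem_linkedStarts.1 hs
    obtain ⟨p, hp, hpR⟩ := exists_isPathFT_of_reflTransGen hRA hR (hstart s hs) hreach
    obtain ⟨c, hsc, -⟩ := hreach.cases_head.resolve_left hst
    obtain ⟨d, -, hdt⟩ := hreach.cases_tail.resolve_left (Ne.symm hst)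
    refine ⟨p, ⟨s, t, ?_, ?_, hst, hp⟩, hpR⟩
    · rcases Finset.mem_union.1 hsXY with h | h
      exacts [h, hY s c (hRA s c hsc) h]
    · rcases Finset.mem_union.1 htXY with h | h
      exacts [hX d t (hRA d t hdt) h, h]
  choose path hpath hreach using hpath
  obtain ⟨f⟩ : Nonempty (Fin k ↪ linkedStarts R X Y) :=
    Function.Embedding.nonempty_of_card_le (by simpa using hk)
  refine ⟨fun i => path (f i), fun i => hpath (f i), fun i j hij v hvi hvj => hij (f.injective ?_)⟩
  apply Subtype.ext
  rcases (hreach (f i) v hvi).total_of_injective hR (hreach (f j) v hvj) with h | h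
  · exact h.eq_of_forall_not_rel_right (hstart _ (f j).2)
  · exact (h.eq_of_forall_not_rel_right (hstart _ (f i).2)).symm

end Linked

section Counting

variable {V : Type*} [Fintype V] [DecidableEq V] {A : V → V → Prop} {X Y : Finset V}
  {M : Finset ((V ⊕ V) × (V ⊕ V))}

-- `Sum.inr v` is not a vertex of `G'` when `v ∈ X ∪ Y`, so it is left out of the count.
theorem card_unsaturated (hM : IsMatching (auxAdj A X Y) M)
    (hor : ∀ e ∈ M, auxRel A X Y e.1 e.2) :
    (Finset.univ \ (saturated M ∪ (X ∪ Y).image .inr)).card + 2 * M.card + (X ∪ Y).card =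
      2 * Fintype.card V := by
  have hdisj : Disjoint (saturated M) ((X ∪ Y).image .inr) := by
    rw [Finset.disjoint_right]
    intro p hp hsat
    obtain ⟨v, hv, rfl⟩ := Finset.mem_image.1 hp
    exact (inr_mem_saturated hor hsat).1 hv
  have hsub := Finset.card_sdiff_of_subset (Finset.subset_univ (saturated M ∪ (X ∪ Y).image .inr))
  have hle := Finset.card_le_univ (saturated M ∪ (X ∪ Y).image .inr)
  rw [Finset.card_union_of_disjoint hdisj, hM.card_saturated,
    Finset.card_image_of_injective _ Sum.inr_injective] at hsub hle
  rw [Finset.card_univ, Fintype.card_sum] at hsub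
  rw [Fintype.card_sum] at hle
  omega

theorem exists_unsaturated_of_not_mem_linked (harc : ∀ a b, A a b → a ≠ b)
    (hM : IsMatching (auxAdj A X Y) M) (hor : ∀ e ∈ M, auxRel A X Y e.1 e.2) {x : V}
    (hx : x ∈ (X ∪ Y) \
      (linkedStarts (matchingArc A X Y M) X Y ∪ linkedEnds (matchingArc A X Y M) X Y)) :
    ∃ p ∈ Finset.univ \ (saturated M ∪ (X ∪ Y).image .inr),
      p.elim (ReflTransGen (matchingArc A X Y M) x)
        (fun v => ReflTransGen (matchingArc A X Y M) v x) := by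
  have hxXY := (Finset.mem_sdiff.1 hx).1
  by_cases hpred : ∃ u, matchingArc A X Y M u x
  · obtain ⟨u, hu⟩ := hpred
    obtain ⟨w, hwx, hw⟩ := exists_reflTransGen_forall_not_rel_swap (r := matchingArc A X Y M)
      (fun _ _ _ => hM.matchingArc_right_unique) fun c => hM.not_matchingArc_of_matchingArc hxXY hu
    have hwx' : w ≠ x := by
      rintro rfl
      exact hw u hu
    have hwXY : w ∉ X ∪ Y := fun h => hwx' (eq_of_not_mem_linked hx h (Or.inr hwx)).symm
    obtain ⟨c, hwc, -⟩ := hwx.cases_head.resolve_left hwx'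
    refine ⟨.inr w, Finset.mem_sdiff.2 ⟨Finset.mem_univ _, ?_⟩, hwx⟩
    rw [Finset.mem_union, not_or, Sum.inr_injective.mem_finset_image]
    refine ⟨fun hsat => ?_, hwXY⟩
    rcases (inr_mem_saturated hor hsat).2 with ⟨u', hu'⟩ | hcopy
    exacts [hw u' hu', hM.not_matchingArc_from_of_copy_mem harc hcopy hwc]
  · simp only [not_exists] at hpred
    obtain ⟨z, hxz, hz⟩ := exists_reflTransGen_forall_not_rel (r := matchingArc A X Y M)
      (fun _ _ _ => hM.matchingArc_left_unique) hpred
    refine ⟨.inl z, Finset.mem_sdiff.2 ⟨Finset.mem_univ _, ?_⟩, hxz⟩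
    simp only [Finset.mem_union, Finset.mem_image, reduceCtorEq, and_false, exists_false,
      or_false]
    intro hsat
    rcases inl_mem_saturated hor hsat with ⟨c, hc⟩ | ⟨hzXY, hcopy⟩ | ⟨hzXY, u, hu⟩
    · exact hz c hc
    · have hxz' : x ≠ z := by
        rintro rfl
        exact hzXY hxXY
      obtain ⟨d, -, hdz⟩ := hxz.cases_tail.resolve_left (Ne.symm hxz')
      exact hM.not_matchingArc_into_of_copy_mem harc hcopy hdz
    · obtain rfl := eq_of_not_mem_linked hx hzXY (Or.inl hxz)
      exact hpred u hu

theorem card_not_mem_linked_le (harc : ∀ a b, A a b → a ≠ b)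
    (hM : IsMatching (auxAdj A X Y) M) (hor : ∀ e ∈ M, auxRel A X Y e.1 e.2) :
    ((X ∪ Y) \ (linkedStarts (matchingArc A X Y M) X Y ∪
      linkedEnds (matchingArc A X Y M) X Y)).card ≤
      (Finset.univ \ (saturated M ∪ (X ∪ Y).image .inr)).card := by
  set R := matchingArc A X Y M
  refine Finset.card_le_card_of_forall_subsingleton
    (fun x p => p.elim (ReflTransGen R x) (fun v => ReflTransGen R v x))
    (fun x hx => exists_unsaturated_of_not_mem_linked harc hM hor hx) ?_
  rintro (v | v) - x ⟨hx, hxv⟩ x' ⟨hx', hx'v⟩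
  · have := ReflTransGen.total_of_injective (r := R) (fun _ _ _ => hM.matchingArc_left_unique)
      hxv hx'v
    exact eq_of_not_mem_linked hx (Finset.mem_sdiff.1 hx').1 this
  · have := ReflTransGen.total_of_functional (r := R)
      (fun _ _ _ => hM.matchingArc_right_unique) hxv hx'v
    exact eq_of_not_mem_linked hx (Finset.mem_sdiff.1 hx').1 this

theorem le_card_linkedStarts (harc : ∀ a b, A a b → a ≠ b)
    (hM : IsMatching (auxAdj A X Y) M) (hor : ∀ e ∈ M, auxRel A X Y e.1 e.2) {k : ℕ}
    (hcard : M.card = k + (Finset.univ \ (X ∪ Y)).card) :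
    k ≤ (linkedStarts (matchingArc A X Y M) X Y).card := by
  have hsub : linkedStarts (matchingArc A X Y M) X Y ∪ linkedEnds (matchingArc A X Y M) X Y ⊆
      X ∪ Y :=
    Finset.union_subset (fun s hs => (mem_linkedStarts.1 hs).1)
      (fun t ht => (mem_linkedEnds.1 ht).1)
  have := card_not_mem_linked_le harc hM hor
  have := card_unsaturated hM hor
  have := card_linkedEnds_le (R := matchingArc A X Y M)
    (fun _ _ _ => hM.matchingArc_right_unique)
    fun v hv u w => hM.not_matchingArc_of_matchingArc (u := u) (w := w) hv
  have := Finset.card_sdiff_of_subset hsub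
  have := Finset.card_le_card hsub
  have := Finset.card_union_le (linkedStarts (matchingArc A X Y M) X Y)
    (linkedEnds (matchingArc A X Y M) X Y)
  have := Finset.card_le_univ (X ∪ Y)
  have hV := Finset.card_sdiff_of_subset (Finset.subset_univ (X ∪ Y))
  rw [Finset.card_univ] at hV
  omega

end Counting

theorem exists_disjoint_paths_of_matching {V : Type*} [Fintype V] [DecidableEq V]
    {A : V → V → Prop} {X Y : Finset V} {M : Finset ((V ⊕ V) × (V ⊕ V))}
    (harc : ∀ a b, A a b → a ≠ b)
    (hX : ∀ a b, A a b → b ∈ X → b ∈ Y) (hY : ∀ a b, A a b → a ∈ Y → a ∈ X)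
    (hM : IsMatching (auxAdj A X Y) M) {k : ℕ}
    (hcard : M.card = k + (Finset.univ \ (X ∪ Y)).card) :
    ∃ P : Fin k → List V,
      (∀ i, ∃ x y, x ∈ X ∧ y ∈ Y ∧ x ≠ y ∧ IsPathFT A x y (P i)) ∧
      (∀ i j, i ≠ j → ∀ v, v ∈ P i → v ∉ P j) := by
  obtain ⟨M', hM', hor, hM'card⟩ := hM.exists_oriented
  exact exists_disjoint_paths_of_le_card_linkedStarts (R := matchingArc A X Y M') hX hY
    (fun _ _ h => h.1)
    (fun _ _ _ => hM'.matchingArc_left_unique)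
    (fun v hv _ _ => hM'.not_matchingArc_of_matchingArc hv)
    (le_card_linkedStarts harc hM' hor (hM'card.trans hcard))

section PathArc

variable {ι α : Type*} {q : ι → List α} {a b c : α}

def PathArc (q : ι → List α) (a b : α) : Prop := ∃ i, [a, b] <:+: q i

theorem PathArc.rel {r : α → α → Prop} (hq : ∀ i, (q i).IsChain r) (h : PathArc q a b) :
    r a b :=
  let ⟨i, hi⟩ := h
  List.isChain_pair.1 ((hq i).infix hi)

theorem PathArc.left_unique (hnd : ∀ i, (q i).Nodup)
    (hdisj : ∀ i j v, v ∈ q i → v ∈ q j → i = j) (ha : PathArc q a c) (hb : PathArc q b c) :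
    a = b := by
  obtain ⟨i, hi⟩ := ha
  obtain ⟨j, hj⟩ := hb
  obtain rfl := hdisj i j c (hi.subset (by simp)) (hj.subset (by simp))
  exact (hnd i).eq_of_pair_infix hi hj

theorem not_pathArc_head (hnd : ∀ i, (q i).Nodup) (hdisj : ∀ i j v, v ∈ q i → v ∈ q j → i = j)
    {i : ι} {t : List α} (hi : q i = b :: t) : ¬ PathArc q a b := by
  rintro ⟨j, hj⟩
  obtain rfl := hdisj j i b (hj.subset (by simp)) (hi ▸ List.mem_cons_self)
  have := List.mem_tail_of_pair_infix hj
  rw [hi] at this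
  exact (List.nodup_cons.1 (hi ▸ hnd j)).1 this

theorem exists_pathArc_of_mem {i : ι} {l : List α} {z : α} (hi : q i = l ++ [z]) (ha : a ∈ l) :
    ∃ b, PathArc q a b :=
  let ⟨b, hb⟩ := List.exists_pair_infix_append_singleton (z := z) ha
  ⟨b, i, hi ▸ hb⟩

end PathArc

section Forward

variable {V : Type*} [DecidableEq V] {A : V → V → Prop} {X Y : Finset V}

theorem exists_trimmed_path (hX : ∀ a b, A a b → b ∈ X → b ∈ Y) {x y : V} {p : List V}
    (hp : IsPathFT A x y p) (hy : y ∈ Y) (hxy : x ≠ y) :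
    ∃ l z, z ∈ Y ∧ (∀ v ∈ l, v ∉ X ∪ Y) ∧ x :: l ++ [z] <+: p := by
  obtain ⟨⟨-, -, hch⟩, hhead, hlast⟩ := hp
  obtain ⟨r, rfl⟩ : ∃ r, p = x :: r := by
    cases p with
    | nil => simp at hhead
    | cons a r => exact ⟨r, by simpa using hhead⟩
  have hyr : y ∈ r := (List.mem_cons.1 (List.mem_of_getLast? hlast)).resolve_left hxy.symm
  obtain ⟨l, z, hpre, hz, hl⟩ := List.exists_append_singleton_prefix (· ∈ Y) ⟨y, hyr, hy⟩
  have hq : x :: l ++ [z] <+: x :: r := List.cons_prefix_cons.2 ⟨rfl, hpre⟩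
  refine ⟨l, z, hz, fun v hv hvXY => ?_, hq⟩
  obtain ⟨u, -, huv⟩ := ((hch : List.IsChain A (x :: r)).infix hq.isInfix).exists_mem_rel_of_mem
    (List.mem_append_left _ hv)
  rcases Finset.mem_union.1 hvXY with h | h
  exacts [hl v hv (hX u v huv h), hl v hv h]

variable [Fintype V]

theorem isMatching_image_linkage {S : V → V → Prop} (σ : V → V ⊕ V)
    (hσ : ∀ v, (∃ b, S v b ∧ σ v = inPort X Y b) ∨ ((∀ b, ¬ S v b) ∧ σ v = .inr v))
    (hSA : ∀ a b, S a b → A a b) (hS : ∀ a b c, S a c → S b c → a = b) {X₀ : Finset V}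
    (hsucc : ∀ x ∈ X₀, ∃ b, S x b) (hpred : ∀ x ∈ X₀, ∀ a, ¬ S a x)
    (hinner : ∀ v ∉ X ∪ Y, ∀ u, S u v → ∃ w, S v w) :
    IsMatching (auxAdj A X Y) ((X₀ ∪ (Finset.univ \ (X ∪ Y))).image fun v => (.inl v, σ v)) := by
  have hD : ∀ v ∈ X₀ ∪ (Finset.univ \ (X ∪ Y)), v ∈ X ∪ Y → v ∈ X₀ := by
    intro v hv hvXY
    rcases Finset.mem_union.1 hv with h | h
    exacts [h, absurd hvXY (Finset.mem_sdiff.1 h).2]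
  refine isMatching_image_of_injOn Sum.inl_injective ?_ (fun v hv => ?_) (fun a ha b _ hab => ?_)
  · have hexit : ∀ a b c, S a c → (∀ w, ¬ S b w) → inPort X Y c ≠ .inr b := by
      intro a b c hac hb hcb
      obtain ⟨rfl, hcXY⟩ := inPort_eq_inr_iff.1 hcb
      obtain ⟨w, hw⟩ := hinner c hcXY a hac
      exact hb w hw
    intro a _ b _ hab
    rcases hσ a with ⟨c, hac, hσa⟩ | ⟨ha, hσa⟩ <;> rcases hσ b with ⟨d, hbd, hσb⟩ | ⟨hb, hσb⟩ <;>
      rw [hσa, hσb] at hab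
    · exact hS a b c hac (inPort_injective hab ▸ hbd)
    · exact absurd hab (hexit a b c hac hb)
    · exact absurd hab.symm (hexit b a d hbd ha)
    · exact Sum.inr_injective hab
  · rcases hσ v with ⟨b, hb, hσv⟩ | ⟨hv', hσv⟩ <;> rw [hσv]
    · exact Or.inl (auxRel_inl_inPort (hSA v b hb))
    · have hvXY : v ∉ X ∪ Y := fun h => by
        obtain ⟨b, hb⟩ := hsucc v (hD v hv h)
        exact hv' b hb
      exact Or.inl (Or.inr ⟨rfl, hvXY⟩)
  · rcases hσ b with ⟨c, hbc, hσb⟩ | ⟨-, hσb⟩ <;> rw [hσb] at hab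
    · obtain ⟨rfl, haXY⟩ := inPort_eq_inl_iff.1 hab.symm
      exact hpred c (hD c ha haXY) b hbc
    · exact Sum.inl_ne_inr hab

/-- Each vertex `v` in `X₀` or outside `X ∪ Y` is matched along its arc of `S` if it has one,
and to its copy `v'` otherwise. -/
theorem exists_matching_of_linkage (S : V → V → Prop)
    (hSA : ∀ a b, S a b → A a b) (hS : ∀ a b c, S a c → S b c → a = b)
    {X₀ : Finset V} (hX₀ : X₀ ⊆ X ∪ Y) (hsucc : ∀ x ∈ X₀, ∃ b, S x b)
    (hpred : ∀ x ∈ X₀, ∀ a, ¬ S a x) (hinner : ∀ v ∉ X ∪ Y, ∀ u, S u v → ∃ w, S v w) :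
    ∃ M, IsMatching (auxAdj A X Y) M ∧ M.card = X₀.card + (Finset.univ \ (X ∪ Y)).card := by
  classical
  let σ : V → V ⊕ V := fun v => if h : ∃ b, S v b then inPort X Y h.choose else .inr v
  have hσ : ∀ v, (∃ b, S v b ∧ σ v = inPort X Y b) ∨ ((∀ b, ¬ S v b) ∧ σ v = .inr v) := by
    intro v
    by_cases h : ∃ b, S v b
    · exact Or.inl ⟨h.choose, h.choose_spec, dif_pos h⟩
    · exact Or.inr ⟨not_exists.1 h, dif_neg h⟩
  refine ⟨_, isMatching_image_linkage σ hσ hSA hS hsucc hpred hinner, ?_⟩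
  rw [Finset.card_image_of_injective _ fun a b h => Sum.inl_injective (congrArg Prod.fst h),
    Finset.card_union_of_disjoint (Finset.disjoint_left.2 fun v hv hv' =>
      (Finset.mem_sdiff.1 hv').2 (hX₀ hv))]

theorem exists_matching_of_disjoint_paths (hX : ∀ a b, A a b → b ∈ X → b ∈ Y) {k : ℕ}
    (P : Fin k → List V) (hP : ∀ i, ∃ x y, x ∈ X ∧ y ∈ Y ∧ x ≠ y ∧ IsPathFT A x y (P i))
    (hdisj : ∀ i j, i ≠ j → ∀ v, v ∈ P i → v ∉ P j) :
    ∃ M, IsMatching (auxAdj A X Y) M ∧ M.card = k + (Finset.univ \ (X ∪ Y)).card := by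
  choose x y hx hy hxy hp using hP
  choose l z hz hl hq using fun i => exists_trimmed_path hX (hp i) (hy i) (hxy i)
  set q : Fin k → List V := fun i => x i :: l i ++ [z i]
  have hnd : ∀ i, (q i).Nodup := fun i => (hp i).1.2.1.sublist (hq i).sublist
  have hsame : ∀ i j v, v ∈ q i → v ∈ q j → i = j := fun i j v hi hj =>
    by_contra fun hij => hdisj i j hij v ((hq i).subset hi) ((hq j).subset hj)
  have hxinj : Function.Injective x := fun i j h =>
    hsame i j (x i) List.mem_cons_self (h ▸ List.mem_cons_self)
  have hinner : ∀ v ∉ X ∪ Y, ∀ u, PathArc q u v → ∃ w, PathArc q v w := by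
    rintro v hvXY u ⟨i, hi⟩
    refine exists_pathArc_of_mem (i := i) (l := x i :: l i) rfl ?_
    rcases List.mem_cons.1 (hi.subset (by simp) : v ∈ q i) with rfl | hv
    · exact List.mem_cons_self
    · rcases List.mem_append.1 hv with hv | hv
      · exact List.mem_cons_of_mem _ hv
      · exact absurd (Finset.mem_union_right _ (List.mem_singleton.1 hv ▸ hz i)) hvXY
  obtain ⟨M, hM, hcard⟩ := exists_matching_of_linkage (PathArc q)
    (fun _ _ => (PathArc.rel fun i => (hp i).1.2.2.infix (hq i).isInfix))
    (fun _ _ _ => PathArc.left_unique hnd hsame)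
    (Finset.forall_mem_image.2 fun i _ => Finset.mem_union_left _ (hx i))
    (Finset.forall_mem_image.2 fun i _ => exists_pathArc_of_mem rfl List.mem_cons_self)
    (Finset.forall_mem_image.2 fun i _ _ => not_pathArc_head hnd hsame rfl)
    hinner
  refine ⟨M, hM, ?_⟩
  rwa [Finset.card_image_of_injective _ hxinj, Finset.card_univ, Fintype.card_fin] at hcard

end Forward

theorem stmt4 {V : Type*} [Fintype V] [DecidableEq V]
    (A : V → V → Prop) (harc : ∀ a b, A a b → a ≠ b)
    (X Y : Finset V)
    (hX : ∀ a b, A a b → b ∈ X → b ∈ Y)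
    (hY : ∀ a b, A a b → a ∈ Y → a ∈ X)
    (k : ℕ) :
    (∃ P : Fin k → List V,
      (∀ i, ∃ x y, x ∈ X ∧ y ∈ Y ∧ x ≠ y ∧ IsPathFT A x y (P i)) ∧
      (∀ i j, i ≠ j → ∀ v, v ∈ P i → v ∉ P j)) ↔
    (∃ M : Finset ((V ⊕ V) × (V ⊕ V)), IsMatching (auxAdj A X Y) M ∧
      M.card = k + (Finset.univ \ (X ∪ Y)).card) :=
  ⟨fun ⟨P, hP, hdisj⟩ => exists_matching_of_disjoint_paths hX P hP hdisj,
    fun ⟨_, hM, hcard⟩ => exists_disjoint_paths_of_matching harc hX hY hM hcard⟩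
end

section
/- Let G be a digraph in which parallel arcs are allowed, let s ≠ t be vertices of G, let p be the number of arcs from s to t, and let k_1,k_2,k_3 be nonnegative integers. Then G contains k_1+k_2+k_3 pairwise internally vertex-disjoint (s,t)-paths of which at least k_2+k_3 have length at least 2 and at least k_3 have length at least 3 (that is, a subdivision, with tail s and head t, of the spindle having k_1 paths of length 1, k_2 paths of length 2 and k_3 paths of length 3), if and only if G contains k'_2+k_3 pairwise internally vertex-disjoint (s,t)-paths, each of length at least 2, of which at least k_3 have length at least 3, where k'_2 = k_2 + k_1 − min{p,k_1}. (When parallel arcs are present, distinct paths of length 1 must use distinct arcs from s to t.) -/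
/-- `p` is a directed path in the digraph (with parallel arcs allowed) whose arc
multiset is `A`: a nonempty list of pairwise distinct vertices in which each pair of
consecutive vertices is joined by an arc. -/
def MIsPath {V : Type*} [DecidableEq V] (A : Multiset (V × V)) (p : List V) : Prop :=
  p ≠ [] ∧ p.Nodup ∧ p.Chain' (fun a b => (a, b) ∈ A)

/-- `p` is a directed `(u,v)`-path. -/
def MIsPathFT {V : Type*} [DecidableEq V] (A : Multiset (V × V)) (u v : V)
    (p : List V) : Prop :=
  MIsPath A p ∧ p.head? = some u ∧ p.getLast? = some v

/-! A path of length `ℓ` is a list of `ℓ + 1` vertices, and the only `(s,t)`-path of length `1`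
is `[s, t]`. Hence a family of `k₁ + k₂ + k₃` paths containing at most `p` copies of `[s, t]`
has at least `max (k₂ + k₃) (k₁ + k₂ + k₃ - p) = k'₂ + k₃` longer members, which can be chosen
to include `k₃` paths of length at least `3`. Conversely, `min p k₁ ≤ p` copies of `[s, t]`
complete `k'₂ + k₃` longer paths to such a family; as their only vertices are `s` and `t`,
internal disjointness is preserved. -/

section Paths

variable {V : Type*} [DecidableEq V] {A : Multiset (V × V)} {s t : V}

theorem MIsPathFT.eq_pair_or_three_le_length (hst : s ≠ t) {l : List V}
    (h : MIsPathFT A s t l) : l = [s, t] ∨ 3 ≤ l.length := by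
  obtain ⟨-, hhead, hlast⟩ := h
  match l, hhead, hlast with
  | [_], rfl, hlast => exact absurd (Option.some_injective _ hlast) hst
  | [_, _], rfl, rfl => exact Or.inl rfl
  | _ :: _ :: _ :: _, _, _ => exact Or.inr (by simp)

theorem MIsPathFT.pair (hst : s ≠ t) (h : (s, t) ∈ A) : MIsPathFT A s t [s, t] :=
  ⟨⟨List.cons_ne_nil _ _, by simp [hst], List.isChain_pair.2 h⟩, rfl, rfl⟩

open Finset in
theorem MIsPathFT.card_le_card_filter_three_le_length_add {ι : Type*} [Fintype ι]
    (hst : s ≠ t) {P : ι → List V} (hP : ∀ i, MIsPathFT A s t (P i)) :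
    Fintype.card ι ≤ #{i | 3 ≤ (P i).length} + #{i | P i = [s, t]} := by
  rw [← card_univ, ← card_filter_add_card_filter_not (s := univ) (fun i => 3 ≤ (P i).length)]
  refine Nat.add_le_add_left (card_le_card fun i hi => ?_) _
  simp only [mem_filter, mem_univ, true_and] at hi ⊢
  exact ((hP i).eq_pair_or_three_le_length hst).resolve_right hi

end Paths

def PairwiseInternallyDisjoint {ι V : Type*} (s t : V) (P : ι → List V) : Prop :=
  ∀ i j, i ≠ j → ∀ x, x ∈ P i → x ∈ P j → x = s ∨ x = t

namespace PairwiseInternallyDisjoint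

variable {ι κ V : Type*} {s t : V}

theorem comp_injective {P : ι → List V} (hP : PairwiseInternallyDisjoint s t P)
    {f : κ → ι} (hf : f.Injective) : PairwiseInternallyDisjoint s t (P ∘ f) :=
  fun i j hij => hP (f i) (f j) (hf.ne hij)

theorem sumElim {P : ι → List V} (hP : PairwiseInternallyDisjoint s t P) {R : κ → List V}
    (hR : ∀ k, ∀ x ∈ R k, x = s ∨ x = t) :
    PairwiseInternallyDisjoint s t (Sum.elim P R) := by
  rintro (i | i) (j | j) hij x hxi hxj
  · exact hP i j (fun h => hij (congrArg _ h)) x hxi hxj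
  · exact hR j x hxj
  · exact hR i x hxi
  · exact hR i x hxi

end PairwiseInternallyDisjoint

section Counting

open Finset

theorem card_filter_eq_add_of_equiv_sum {ι α β : Type*} [Fintype ι] [Fintype α] [Fintype β]
    (e : ι ≃ α ⊕ β) (r : ι → Prop) [DecidablePred r] :
    #{i | r i} = #{a | r (e.symm (.inl a))} + #{b | r (e.symm (.inr b))} := by
  simp only [card_filter]
  rw [← Fintype.sum_equiv e.symm _ (fun i => if r i then 1 else 0) fun _ => rfl,
    Fintype.sum_sum_type]

theorem exists_embedding_fin_mem_and_le_card_filter_mem {ι : Type*} [DecidableEq ι]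
    {S T : Finset ι} (hTS : T ⊆ S) {k m : ℕ} (hkT : k ≤ #T) (hkm : k ≤ m)
    (hmS : m ≤ #S) :
    ∃ f : Fin m ↪ ι, (∀ i, f i ∈ S) ∧ k ≤ #{i | f i ∈ T} := by
  obtain ⟨T', hT'T, hT'⟩ := exists_subset_card_eq hkT
  obtain ⟨C, hT'C, hCS, hC⟩ :=
    exists_subsuperset_card_eq (hT'T.trans hTS) (hT'.trans_le hkm) hmS
  let e : Fin m ≃ C := (finCongr hC.symm).trans C.equivFin.symm
  refine ⟨e.toEmbedding.trans (.subtype _), fun i => hCS (e i).2, ?_⟩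
  rw [← hT']
  refine card_le_card_of_surjOn (fun i => (e i : ι)) fun x hx => ?_
  refine ⟨e.symm ⟨x, hT'C hx⟩, ?_, by simp⟩
  simpa using hT'T hx

end Counting

theorem stmt7_general {V : Type*} [DecidableEq V] (A : Multiset (V × V))
    (s t : V) (hst : s ≠ t) (p : ℕ) (hp : p = A.count (s, t))
    (k1 k2 k3 : ℕ) :
    (∃ P : Fin (k1 + k2 + k3) → List V,
      (∀ i, MIsPathFT A s t (P i)) ∧
      (∀ i j, i ≠ j → ∀ x, x ∈ P i → x ∈ P j → x = s ∨ x = t) ∧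
      (Finset.univ.filter fun i => P i = [s, t]).card ≤ p ∧
      k2 + k3 ≤ (Finset.univ.filter fun i => 3 ≤ (P i).length).card ∧
      k3 ≤ (Finset.univ.filter fun i => 4 ≤ (P i).length).card) ↔
    (∃ Q : Fin ((k2 + k1 - min p k1) + k3) → List V,
      (∀ i, MIsPathFT A s t (Q i) ∧ 3 ≤ (Q i).length) ∧
      (∀ i j, i ≠ j → ∀ x, x ∈ Q i → x ∈ Q j → x = s ∨ x = t) ∧
      k3 ≤ (Finset.univ.filter fun i => 4 ≤ (Q i).length).card) := by
  constructor
  · rintro ⟨P, hP, hdisj : PairwiseInternallyDisjoint s t P, hshort, h3, h4⟩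
    have hlong := MIsPathFT.card_le_card_filter_three_le_length_add hst hP
    rw [Fintype.card_fin] at hlong
    obtain ⟨f, hf3, hf4⟩ := exists_embedding_fin_mem_and_le_card_filter_mem
      (m := (k2 + k1 - min p k1) + k3) (S := Finset.univ.filter fun i => 3 ≤ (P i).length)
      (Finset.monotone_filter_right _ fun _ _ => Nat.le_of_succ_le)
      h4 (by omega) (by omega)
    exact ⟨P ∘ f, fun i => ⟨hP _, by simpa using hf3 i⟩, hdisj.comp_injective f.injective,
      by simpa using hf4⟩
  · rintro ⟨Q, hQ, hdisj : PairwiseInternallyDisjoint s t Q, h4⟩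
    have hA (b : Fin (min p k1)) : (s, t) ∈ A := Multiset.count_pos.1 (by have := b.isLt; omega)
    have hQ3 (a) : 3 ≤ (Q a).length := (hQ a).2
    have hQ_ne (a) : Q a ≠ [s, t] := fun h => by simpa [h] using hQ3 a
    let e : Fin (k1 + k2 + k3) ≃ Fin ((k2 + k1 - min p k1) + k3) ⊕ Fin (min p k1) :=
      (finCongr (by omega)).trans finSumFinEquiv.symm
    refine ⟨fun i => Sum.elim Q (fun _ => [s, t]) (e i), fun i => ?_,
      (hdisj.sumElim (by simp)).comp_injective e.injective, ?_, ?_, ?_⟩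
    · dsimp only
      rcases e i with a | b
      exacts [(hQ a).1, .pair hst (hA b)]
    all_goals
      simp only [card_filter_eq_add_of_equiv_sum e, Equiv.apply_symm_apply, Sum.elim_inl,
        Sum.elim_inr]
      simp [hQ3, hQ_ne] <;> omega

theorem stmt7 {V : Type*} [DecidableEq V] (A : Multiset (V × V))
    (harc : ∀ e ∈ A, Prod.fst e ≠ Prod.snd e)
    (s t : V) (hst : s ≠ t) (p : ℕ) (hp : p = A.count (s, t))
    (k1 k2 k3 : ℕ) :
    (∃ P : Fin (k1 + k2 + k3) → List V,
      (∀ i, MIsPathFT A s t (P i)) ∧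
      (∀ i j, i ≠ j → ∀ x, x ∈ P i → x ∈ P j → x = s ∨ x = t) ∧
      (Finset.univ.filter fun i => P i = [s, t]).card ≤ p ∧
      k2 + k3 ≤ (Finset.univ.filter fun i => 3 ≤ (P i).length).card ∧
      k3 ≤ (Finset.univ.filter fun i => 4 ≤ (P i).length).card) ↔
    (∃ Q : Fin ((k2 + k1 - min p k1) + k3) → List V,
      (∀ i, MIsPathFT A s t (Q i) ∧ 3 ≤ (Q i).length) ∧
      (∀ i j, i ≠ j → ∀ x, x ∈ Q i → x ∈ Q j → x = s ∨ x = t) ∧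
      k3 ≤ (Finset.univ.filter fun i => 4 ≤ (Q i).length).card) :=
  stmt7_general A s t hst p hp k1 k2 k3
end

section
/- Let H be an acyclic digraph with a fixed topological ordering ≤ of V(H), let x ∈ V(H), let e_1,…,e_k be pairwise distinct arcs of H and let t_1,…,t_k be nonnegative integers. Call the tuple (e_1,t_1,…,e_k,t_k) realizable (from x) if there exist k pairwise arc-disjoint paths P_1,…,P_k in H, each starting at x, such that for each j the last arc of P_j is e_j and the length of P_j is at least t_j. Let w be the ≤-greatest vertex among the heads of e_1,…,e_k, let w' be the ≤-greatest vertex among the tails of those arcs of {e_1,…,e_k} whose head is w, and let i be the index with e_i = (w',w). Assume w ≠ x. Then (e_1,t_1,…,e_k,t_k) is realizable if and only if at least one of the following holds: (i) there is an arc e of H with head w' and e ∉ {e_1,…,e_k} such that the tuple obtained from (e_1,t_1,…,e_k,t_k) by replacing e_i by e and t_i by max(t_i−1,0) is realizable; (ii) w' = x, t_i ≤ 1, and the tuple (e_1,t_1,…,e_{i−1},t_{i−1},e_{i+1},t_{i+1},…,e_k,t_k) obtained by removing the i-th pair is realizable. -/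
/-- The list of arcs of a path (consecutive pairs of vertices). -/
def arcsOf {V : Type*} (p : List V) : List (V × V) := p.zip p.tail

/-- The tuple `(e 0, t 0, …)` is realizable from `x` in the digraph with arc relation
`A`: there are `k` pairwise arc-disjoint paths `P j`, each starting at `x`, such that
the last arc of `P j` is `e j` and the length (number of arcs) of `P j` is at
least `t j`. -/
def Realizable {V : Type*} (A : V → V → Prop) (x : V) {k : ℕ}
    (e : Fin k → V × V) (t : Fin k → ℕ) : Prop :=
  ∃ P : Fin k → List V,
    (∀ j, (P j).Nodup ∧ (P j).Chain' A ∧ (P j).head? = some x ∧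
      (∃ q, P j = q ++ [(e j).1, (e j).2]) ∧ t j + 1 ≤ (P j).length) ∧
    ∀ i j, i ≠ j → ∀ a ∈ arcsOf (P i), a ∉ arcsOf (P j)

/-!
Along a path the vertices increase in the topological order, so an arc whose head is at least
the head of the last arc of a path can only be that last arc. Hence `e i = (w', w)`, whose head
is maximal, lies on no path `P j` with `j ≠ i`. Deleting `w` from `P i` leaves either the
one-vertex path `x = w'` (case (ii)) or a path whose last arc `(z, w')` lies on `P i`, so by
arc-disjointness it is none of the `e j` (case (i)). Conversely, appending `w` to the path ending at
`w'`, or inserting the path `x w`, adds only the arc `e i`, which no other path uses.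
-/

open Function

section Pairwise
variable {α : Type*} {r : α → α → Prop} [Std.Symm r]

theorem Pairwise.update_of_symm {ι : Type*} [DecidableEq ι] {f : ι → α}
    (hf : Pairwise (r on f)) {i : ι} {b : α} (hb : ∀ j ≠ i, r b (f j)) :
    Pairwise (r on update f i b) := by
  intro j k hjk
  rcases eq_or_ne j i with rfl | hj
  · simpa [onFun, hjk.symm] using hb k hjk.symm
  rcases eq_or_ne k i with rfl | hk
  · simpa [onFun, hj] using symm_of r (hb j hj)
  · simpa [onFun, hj, hk] using hf hjk

theorem Pairwise.insertNth_of_symm {m : ℕ} {f : Fin m → α} (hf : Pairwise (r on f))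
    (i : Fin (m + 1)) {b : α} (hb : ∀ l, r b (f l)) :
    Pairwise (r on i.insertNth b f) := by
  intro j k hjk
  induction j using Fin.succAboveCases i <;> induction k using Fin.succAboveCases i
  · exact absurd rfl hjk
  · simpa [onFun] using hb _
  · simpa [onFun] using symm_of r (hb _)
  · simpa [onFun] using hf (fun h => hjk (by rw [h]))

end Pairwise

section Arcs
variable {V : Type*}

theorem arcsOf_append_pair (s : List V) (a b : V) :
    arcsOf (s ++ [a, b]) = arcsOf (s ++ [a]) ++ [(a, b)] := by
  induction s with
  | nil => rfl
  | cons c s ih =>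
    cases s with
    | nil => rfl
    | cons d s => simpa [arcsOf] using ih

theorem arcsOf_subset_append : ∀ l l' : List V, arcsOf l ⊆ arcsOf (l ++ l')
  | [], _ => by simp [arcsOf]
  | [_], _ => by simp [arcsOf]
  | a :: b :: l, l' => List.cons_subset_cons (a, b) (arcsOf_subset_append (b :: l) l')

end Arcs

section Paths
variable {V : Type*}

def ArcDisjoint (p q : List V) : Prop := (arcsOf p).Disjoint (arcsOf q)

instance : Std.Symm (ArcDisjoint (V := V)) := ⟨fun _ _ h => h.symm⟩

def IsRealizingPath (A : V → V → Prop) (x : V) (a : V × V) (s : ℕ) (p : List V) : Prop :=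
  p.Nodup ∧ p.IsChain A ∧ p.head? = some x ∧ (∃ q, p = q ++ [a.1, a.2]) ∧ s + 1 ≤ p.length

theorem realizable_iff {A : V → V → Prop} {x : V} {k : ℕ} {e : Fin k → V × V}
    {t : Fin k → ℕ} :
    Realizable A x e t ↔ ∃ P : Fin k → List V,
      (∀ j, IsRealizingPath A x (e j) (t j) (P j)) ∧ Pairwise (ArcDisjoint on P) :=
  Iff.rfl

namespace IsRealizingPath
variable {A : V → V → Prop} {x : V} {s : ℕ} {p : List V}

theorem exists_eq_append {a : V × V} (hp : IsRealizingPath A x a s p) :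
    ∃ q, p = q ++ [a.1, a.2] :=
  hp.2.2.2.1

theorem mono {a : V × V} {s' : ℕ} (hp : IsRealizingPath A x a s p) (hs : s' ≤ s) :
    IsRealizingPath A x a s' p :=
  ⟨hp.1, hp.2.1, hp.2.2.1, hp.exists_eq_append, (Nat.add_le_add_right hs 1).trans hp.2.2.2.2⟩

theorem mem_arcsOf {a : V × V} (hp : IsRealizingPath A x a s p) : a ∈ arcsOf p := by
  obtain ⟨q, rfl⟩ := hp.exists_eq_append
  simp [arcsOf_append_pair]

theorem dropLast {q : List V} {z u v : V} (hp : IsRealizingPath A x (u, v) s (q ++ [z, u, v])) :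
    IsRealizingPath A x (z, u) (s - 1) (q ++ [z, u]) := by
  obtain ⟨hnd, hch, hx, -, hs⟩ := hp
  have hsplit : q ++ [z, u, v] = (q ++ [z, u]) ++ [v] := by simp
  rw [hsplit] at hnd hch hx hs
  refine ⟨hnd.sublist (List.sublist_append_left _ _), hch.left_of_append, ?_, ⟨q, rfl⟩, ?_⟩
  · simpa [List.head?_append] using hx
  · simp only [List.length_append, List.length_cons, List.length_nil] at hs ⊢; omega

theorem rel {a : V × V} (hp : IsRealizingPath A x a s p) : A a.1 a.2 := by
  obtain ⟨q, rfl⟩ := hp.exists_eq_append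
  exact List.isChain_pair.1 hp.2.1.right_of_append

theorem arcsOf_concat {z u : V} (hp : IsRealizingPath A x (z, u) s p) (v : V) :
    arcsOf (p ++ [v]) = arcsOf p ++ [(u, v)] := by
  obtain ⟨q, rfl⟩ := hp.exists_eq_append
  simpa using arcsOf_append_pair (q ++ [z]) u v

theorem of_pair {u v : V} (huv : A u v) (hne : u ≠ v) (hs : s ≤ 1) :
    IsRealizingPath A u (u, v) s [u, v] :=
  ⟨by simpa using hne, List.isChain_pair.2 huv, rfl, ⟨[], rfl⟩, by simpa using hs⟩

theorem eq_and_le_one {u v : V} (hp : IsRealizingPath A x (u, v) s [u, v]) : u = x ∧ s ≤ 1 :=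
  ⟨by simpa using hp.2.2.1, by simpa using hp.2.2.2.2⟩

variable [Preorder V] (htopo : ∀ a b, A a b → a < b)
include htopo

theorem pairwise_lt {a : V × V} (hp : IsRealizingPath A x a s p) : p.Pairwise (· < ·) :=
  List.isChain_iff_pairwise.1 (hp.2.1.imp htopo)

theorem le_of_mem {a : V × V} (hp : IsRealizingPath A x a s p) {c : V} (hc : c ∈ p) :
    c ≤ a.2 := by
  obtain ⟨q, rfl⟩ := hp.exists_eq_append
  have hlt := hp.pairwise_lt htopo
  have hsplit : q ++ [a.1, a.2] = (q ++ [a.1]) ++ [a.2] := by simp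
  rw [hsplit, List.pairwise_append] at hlt
  rw [hsplit, List.mem_append] at hc
  rcases hc with hc | hc
  · exact (hlt.2.2 c hc a.2 (List.mem_singleton_self _)).le
  · exact (List.mem_singleton.1 hc).le

theorem eq_of_mem_arcsOf {a b : V × V} (hp : IsRealizingPath A x a s p) (hb : b ∈ arcsOf p)
    (hle : a.2 ≤ b.2) : b = a := by
  have hlt := hp.pairwise_lt htopo
  obtain ⟨q, rfl⟩ := hp.exists_eq_append
  rw [arcsOf_append_pair, List.mem_append, List.mem_singleton] at hb
  rcases hb with hb | rfl
  · rw [show q ++ [a.1, a.2] = (q ++ [a.1]) ++ [a.2] by simp, List.pairwise_append] at hlt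
    have hb2 : b.2 ∈ q ++ [a.1] := List.mem_of_mem_tail (List.of_mem_zip hb).2
    exact absurd (hlt.2.2 _ hb2 _ (List.mem_singleton_self _)) (not_lt_of_ge hle)
  · rfl

theorem concat {z u v : V} (hp : IsRealizingPath A x (z, u) s p) (huv : A u v) :
    IsRealizingPath A x (u, v) (s + 1) (p ++ [v]) := by
  have hv : v ∉ p := fun hv => not_le_of_gt (htopo u v huv) (hp.le_of_mem htopo hv)
  obtain ⟨hnd, hch, hx, ⟨q, rfl⟩, hs⟩ := hp
  refine ⟨?_, ?_, ?_, ⟨q ++ [z], by simp⟩, by simpa using hs⟩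
  · simpa using hnd.concat hv
  · exact hch.append (List.isChain_singleton v) (by simpa using huv)
  · simpa [List.head?_append] using hx

end IsRealizingPath
end Paths

section Realizable
variable {V : Type*} {A : V → V → Prop} {x : V} {k : ℕ} {e : Fin k → V × V} {t : Fin k → ℕ}

theorem Realizable.comp_injective {k' : ℕ} (h : Realizable A x e t) {f : Fin k' → Fin k}
    (hf : Injective f) : Realizable A x (e ∘ f) (t ∘ f) := by
  obtain ⟨P, hP, hdisj⟩ := realizable_iff.1 h
  exact realizable_iff.2 ⟨P ∘ f, fun j => hP (f j), hdisj.comp_of_injective hf⟩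

theorem realizable_update {P : Fin k → List V} {i : Fin k} {a : V × V} {s : ℕ} {p : List V}
    (hP : ∀ j ≠ i, IsRealizingPath A x (e j) (t j) (P j)) (hdisj : Pairwise (ArcDisjoint on P))
    (hp : IsRealizingPath A x a s p) (hpP : ∀ j ≠ i, ArcDisjoint p (P j)) :
    Realizable A x (update e i a) (update t i s) := by
  refine realizable_iff.2 ⟨update P i p, fun j => ?_, hdisj.update_of_symm hpP⟩
  rcases eq_or_ne j i with rfl | hj
  · simpa using hp
  · simpa [hj] using hP j hj

variable [Preorder V] (htopo : ∀ a b, A a b → a < b)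
include htopo

theorem IsRealizingPath.not_mem_arcsOf {i j : Fin k} {s : ℕ} {p : List V}
    (hinj : Injective e) (hw : ∀ j, (e j).2 ≤ (e i).2) (hp : IsRealizingPath A x (e j) s p)
    (hji : j ≠ i) : e i ∉ arcsOf p :=
  fun h => hji (hinj (hp.eq_of_mem_arcsOf htopo h (hw j))).symm

theorem realizable_update_dropLast {P : Fin k → List V} {i : Fin k} {q : List V} {z u v : V}
    (hP : ∀ j, IsRealizingPath A x (e j) (t j) (P j)) (hdisj : Pairwise (ArcDisjoint on P))
    (hei : e i = (u, v)) (hPi : P i = q ++ [z, u, v]) :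
    A z u ∧ (∀ j, (z, u) ≠ e j) ∧
      Realizable A x (update e i (z, u)) (update t i (t i - 1)) := by
  have hp : IsRealizingPath A x (z, u) (t i - 1) (q ++ [z, u]) :=
    IsRealizingPath.dropLast (hei ▸ hPi ▸ hP i)
  have hsub : arcsOf (q ++ [z, u]) ⊆ arcsOf (P i) := by
    rw [hPi, show q ++ [z, u, v] = q ++ [z, u] ++ [v] by simp]
    exact arcsOf_subset_append _ _
  refine ⟨hp.rel, fun j hj => ?_, realizable_update (fun j _ => hP j) hdisj hp
    fun j hj => List.disjoint_of_subset_left hsub (hdisj hj.symm)⟩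
  rcases eq_or_ne j i with rfl | hji
  · rw [hei, Prod.mk.injEq] at hj
    exact (htopo z u hp.rel).ne hj.1
  · exact hdisj hji.symm (hsub hp.mem_arcsOf) (hj ▸ (hP j).mem_arcsOf)

theorem realizable_of_realizable_update {i : Fin k} {z u v : V}
    (hinj : Injective e) (hw : ∀ j, (e j).2 ≤ v) (hei : e i = (u, v)) (huv : A u v)
    (h : Realizable A x (update e i (z, u)) (update t i (t i - 1))) : Realizable A x e t := by
  obtain ⟨P, hP, hdisj⟩ := realizable_iff.1 h
  have hPj : ∀ j ≠ i, IsRealizingPath A x (e j) (t j) (P j) := fun j hj => by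
    simpa [hj] using hP j
  have hPi : IsRealizingPath A x (z, u) (t i - 1) (P i) := by simpa using hP i
  have hnew : ∀ j ≠ i, ArcDisjoint (P i ++ [v]) (P j) := by
    intro j hj
    rw [ArcDisjoint, hPi.arcsOf_concat, List.disjoint_append_left, List.singleton_disjoint]
    exact ⟨hdisj hj.symm, hei ▸ (hPj j hj).not_mem_arcsOf htopo hinj (hei ▸ hw) hj⟩
  have hp : IsRealizingPath A x (u, v) (t i) (P i ++ [v]) :=
    (hPi.concat htopo huv).mono (by omega)
  simpa [← hei] using realizable_update hPj hdisj hp hnew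

theorem realizable_of_realizable_comp_succAbove {m : ℕ} {e : Fin (m + 1) → V × V}
    {t : Fin (m + 1) → ℕ} {i : Fin (m + 1)} {v : V}
    (hinj : Injective e) (hw : ∀ j, (e j).2 ≤ v) (hei : e i = (x, v)) (hxv : A x v)
    (hti : t i ≤ 1) (h : Realizable A x (e ∘ i.succAbove) (t ∘ i.succAbove)) :
    Realizable A x e t := by
  obtain ⟨P, hP, hdisj⟩ := realizable_iff.1 h
  have hnew : ∀ l, ArcDisjoint [x, v] (P l) := fun l => by
    rw [ArcDisjoint, show arcsOf [x, v] = [(x, v)] from rfl, List.singleton_disjoint, ← hei]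
    exact (hP l).not_mem_arcsOf htopo hinj (hei ▸ hw) (Fin.succAbove_ne i l)
  refine realizable_iff.2 ⟨i.insertNth [x, v] P, (Fin.forall_iff_succAbove i).2 ⟨?_, ?_⟩,
    hdisj.insertNth_of_symm i hnew⟩
  · simpa [hei] using IsRealizingPath.of_pair hxv (htopo x v hxv).ne hti
  · simpa using hP

end Realizable

theorem stmt10_general {V : Type*} [LinearOrder V] (A : V → V → Prop)
    (htopo : ∀ a b, A a b → a < b)
    (x : V) (m : ℕ) (e : Fin (m + 1) → V × V) (t : Fin (m + 1) → ℕ)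
    (he : ∀ j, A (e j).1 (e j).2) (hinj : Function.Injective e)
    (w w' : V) (i : Fin (m + 1))
    (hei : e i = (w', w))
    (hw : ∀ j, (e j).2 ≤ w) :
    Realizable A x e t ↔
      ((∃ z, A z w' ∧ (∀ j, (z, w') ≠ e j) ∧
          Realizable A x (Function.update e i (z, w'))
            (Function.update t i (t i - 1))) ∨
        (w' = x ∧ t i ≤ 1 ∧
          Realizable A x (e ∘ i.succAbove) (t ∘ i.succAbove))) := by
  have hw'w : A w' w := by simpa [hei] using he i
  constructor
  · intro h
    obtain ⟨P, hP, hdisj⟩ := realizable_iff.1 h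
    have hPi : IsRealizingPath A x (w', w) (t i) (P i) := hei ▸ hP i
    obtain ⟨q, hq⟩ := hPi.exists_eq_append
    rcases List.eq_nil_or_concat q with rfl | ⟨q, z, rfl⟩
    · rw [hq] at hPi
      obtain ⟨hx, hti⟩ := hPi.eq_and_le_one
      exact Or.inr ⟨hx, hti, h.comp_injective Fin.succAbove_right_injective⟩
    · exact Or.inl ⟨z, realizable_update_dropLast htopo hP hdisj hei (by simpa using hq)⟩
  · rintro (⟨z, -, -, h⟩ | ⟨rfl, hti, h⟩)
    · exact realizable_of_realizable_update htopo hinj hw hei hw'w h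
    · exact realizable_of_realizable_comp_succAbove htopo hinj hw hei hw'w hti h

theorem stmt10 {V : Type*} [LinearOrder V] (A : V → V → Prop)
    (htopo : ∀ a b, A a b → a < b)
    (x : V) (m : ℕ) (e : Fin (m + 1) → V × V) (t : Fin (m + 1) → ℕ)
    (he : ∀ j, A (e j).1 (e j).2) (hinj : Function.Injective e)
    (w w' : V) (i : Fin (m + 1))
    (hei : e i = (w', w))
    (hw : ∀ j, (e j).2 ≤ w)
    (hw' : ∀ j, (e j).2 = w → (e j).1 ≤ w')
    (hwx : w ≠ x) :
    Realizable A x e t ↔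
      ((∃ z, A z w' ∧ (∀ j, (z, w') ≠ e j) ∧
          Realizable A x (Function.update e i (z, w'))
            (Function.update t i (t i - 1))) ∨
        (w' = x ∧ t i ≤ 1 ∧
          Realizable A x (e ∘ i.succAbove) (t ∘ i.succAbove))) :=
  stmt10_general A htopo x m e t he hinj w w' i hei hw
end

section
/- Let G be a digraph on n ≥ 2 vertices and let s ≠ t be vertices of G. Let G' be the digraph obtained from G by deleting all arcs with head s and all arcs with tail t, and then adding one new vertex w together with the arcs (s,w) and (w,t). Then G has a Hamiltonian (s,t)-path if and only if there exist integers ℓ_1, ℓ_2 with min{ℓ_1,ℓ_2} ≥ 1 and ℓ_1+ℓ_2 = n+1 such that G' contains a subdivision of a (ℓ_1,ℓ_2)-spindle. -/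
/-- The digraph `G'` obtained from `G` (arc relation `A`) by deleting all arcs with
head `s` and all arcs with tail `t`, and adding a new vertex `w = none` together with
the arcs `(s, w)` and `(w, t)`.  Original vertices are `some v`. -/
def adjAddMid {V : Type*} (A : V → V → Prop) (s t : V) :
    Option V → Option V → Prop
  | some a, some b => A a b ∧ b ≠ s ∧ a ≠ t
  | some a, none => a = s
  | none, some b => b = t
  | none, none => False

section Paths
variable {α : Type*} {R : α → α → Prop}

lemma exists_eq_map_some_of_none_notMem {l : List (Option α)} (h : none ∉ l) :
    ∃ q : List α, l = q.map some := by
  induction l with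
  | nil => exact ⟨[], rfl⟩
  | cons a l ih =>
    obtain ⟨b, rfl⟩ := Option.ne_none_iff_exists'.1 (fun ha => h (ha ▸ List.mem_cons_self))
    obtain ⟨q, rfl⟩ := ih (fun hn => h (List.mem_cons_of_mem _ hn))
    exact ⟨b :: q, rfl⟩

lemma List.Nodup.mem_of_card_le_length [Fintype α] {l : List α} (hl : l.Nodup)
    (hlen : Fintype.card α ≤ l.length) (x : α) : x ∈ l := by
  classical
  have : l.toFinset = Finset.univ :=
    Finset.eq_univ_of_card _
      ((List.toFinset_card_of_nodup hl).trans (hlen.antisymm' hl.length_le_card))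
  simpa using Finset.eq_univ_iff_forall.1 this x

lemma card_le_length_of_forall_mem [Fintype α] {l : List α} (hl : ∀ x, x ∈ l) :
    Fintype.card α ≤ l.length := by
  classical
  calc Fintype.card α = l.toFinset.card := by
        rw [← Finset.card_univ]; congr 1; ext x; simpa using hl x
    _ ≤ l.length := l.toFinset_card_le

lemma length_add_length_le_card_union [DecidableEq α] {l₁ l₂ : List α} (h₁ : l₁.Nodup)
    (h₂ : l₂.Nodup) {u v : α} (hdisj : ∀ x, x ∈ l₁ → x ∈ l₂ → x = u ∨ x = v) :
    l₁.length + l₂.length ≤ (l₁.toFinset ∪ l₂.toFinset).card + 2 := by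
  have hinter : l₁.toFinset ∩ l₂.toFinset ⊆ {u, v} := fun x hx => by
    simp only [Finset.mem_inter, List.mem_toFinset] at hx
    simpa using hdisj x hx.1 hx.2
  have := Finset.card_union_add_card_inter l₁.toFinset l₂.toFinset
  have := (Finset.card_le_card hinter).trans (Finset.card_le_two (a := u) (b := v))
  rw [List.toFinset_card_of_nodup h₁, List.toFinset_card_of_nodup h₂] at *
  omega

lemma IsPathFT.isChain_ne_tail_ne_head {u v : α} {p : List α} (hp : IsPathFT R u v p) :
    p.IsChain (fun a b => R a b ∧ b ≠ u ∧ a ≠ v) := by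
  obtain ⟨⟨-, hnd, hch⟩, hu, hv⟩ := hp
  refine List.isChain_iff_forall_rel_of_append_cons_cons.2 fun a b l₁ l₂ hp => ?_
  subst hp
  refine ⟨(List.isChain_append_cons_cons.1 hch).2.1, ?_, ?_⟩
  · rintro rfl
    cases l₁ <;> simp_all
  · rintro rfl
    rcases l₂.eq_nil_or_concat with rfl | ⟨L, c, rfl⟩ <;>
      simp_all [List.nodup_append, List.getLast?_cons]

end Paths

section AddMid
variable {V : Type*} {A : V → V → Prop} {s t : V}

@[simp] lemma adjAddMid_none_right {x : Option V} : adjAddMid A s t x none ↔ x = some s := by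
  cases x <;> simp [adjAddMid]

@[simp] lemma adjAddMid_none_left {x : Option V} : adjAddMid A s t none x ↔ x = some t := by
  cases x <;> simp [adjAddMid]

lemma not_adjAddMid_some_right (hst : s ≠ t) (x : Option V) : ¬ adjAddMid A s t x (some s) := by
  cases x <;> simp [adjAddMid, hst]

lemma not_adjAddMid_some_left (hst : s ≠ t) (x : Option V) : ¬ adjAddMid A s t (some t) x := by
  cases x <;> simp [adjAddMid, hst.symm]

lemma IsPathFT.map_some_adjAddMid {p : List V} (hp : IsPathFT A s t p) :
    IsPathFT (adjAddMid A s t) (some s) (some t) (p.map some) :=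
  ⟨⟨by simpa using hp.1.1, hp.1.2.1.map (Option.some_injective V),
    (List.isChain_map some).2 hp.isChain_ne_tail_ne_head⟩, by simp [hp.2.1], by simp [hp.2.2]⟩

lemma IsPathFT.of_map_some_adjAddMid {u v : V} {q : List V}
    (hq : IsPathFT (adjAddMid A s t) (some u) (some v) (q.map some)) : IsPathFT A u v q := by
  obtain ⟨⟨hne, hnd, hch⟩, hu, hv⟩ := hq
  refine ⟨⟨by simpa using hne, hnd.of_map some, ?_⟩, by simpa using hu, by simpa using hv⟩
  exact ((List.isChain_map some).1 hch).imp fun _ _ h => h.1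

lemma eq_of_none_mem_of_isChain_adjAddMid (hst : s ≠ t) {p : List (Option V)}
    (hp : p.IsChain (adjAddMid A s t)) (hn : none ∈ p) (hlen : 2 ≤ p.length) :
    p = [none, some t] ∨ p = [some s, none] ∨ p = [some s, none, some t] := by
  obtain ⟨l₁, l₂, rfl⟩ := List.append_of_mem hn
  have hl₁ : l₁ = [] ∨ l₁ = [some s] := by
    rcases l₁.eq_nil_or_concat with rfl | ⟨L, a, rfl⟩
    · exact .inl rfl
    obtain ⟨hL, rfl, -⟩ : (L ++ [a]).IsChain _ ∧ a = some s ∧ _ := by simpa using hp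
    rcases L.eq_nil_or_concat with rfl | ⟨L, b, rfl⟩
    · exact .inr rfl
    · simp [not_adjAddMid_some_right hst] at hL
  have hl₂ : l₂ = [] ∨ l₂ = [some t] := by
    rcases l₂ with _ | ⟨c, _ | ⟨d, l₂⟩⟩
    · exact .inl rfl
    · simp_all
    · obtain ⟨-, rfl, hd, -⟩ : _ ∧ c = some t ∧ _ := by simpa using hp
      exact absurd hd (not_adjAddMid_some_left hst d)
  rcases hl₁ with rfl | rfl <;> rcases hl₂ with rfl | rfl <;> simp_all

end AddMid

section Spindle
variable {V : Type*} [Fintype V] {A : V → V → Prop} {s t : V}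

lemma containsSpindle2_adjAddMid_of_isPathFT (hst : s ≠ t) {p : List V}
    (hp : IsPathFT A s t p) (hcover : ∀ x, x ∈ p) :
    ContainsSpindle2 (adjAddMid A s t) (Fintype.card V - 1) 2 := by
  have hlen := card_le_length_of_forall_mem hcover
  have hpos := List.length_pos_of_ne_nil hp.1.1
  have hmid : IsPathFT (adjAddMid A s t) (some s) (some t) [some s, none, some t] :=
    ⟨⟨by simp, by simp [hst], List.isChain_cons_cons.2 ⟨rfl, List.isChain_pair.2 rfl⟩⟩, rfl, rfl⟩
  refine ⟨some s, some t, p.map some, [some s, none, some t], hp.map_some_adjAddMid, hmid,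
    by rw [List.length_map]; omega, le_rfl, ?_, ?_⟩
  · exact fun h => by simpa using congrArg (none ∈ ·) h
  · simp +contextual

lemma exists_isPathFT_of_spindle_through_none (hst : s ≠ t) {u v : Option V}
    {p₁ p₂ : List (Option V)} (h₁ : IsPathFT (adjAddMid A s t) u v p₁)
    (h₂ : IsPathFT (adjAddMid A s t) u v p₂) (hlen₁ : 2 ≤ p₁.length) (hlen₂ : 2 ≤ p₂.length)
    (hsum : Fintype.card V + 3 ≤ p₁.length + p₂.length) (hne : p₁ ≠ p₂)
    (hdisj : ∀ x, x ∈ p₁ → x ∈ p₂ → x = u ∨ x = v) (hn : none ∈ p₁) :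
    ∃ q : List V, IsPathFT A s t q ∧ ∀ x, x ∈ q := by
  rcases eq_of_none_mem_of_isChain_adjAddMid hst h₁.1.2.2 hn hlen₁ with rfl | rfl | rfl
  · obtain rfl : u = none := by simpa using h₁.2.1.symm
    have hhead := h₂.2.1
    rcases eq_of_none_mem_of_isChain_adjAddMid hst h₂.1.2.2 (List.mem_of_mem_head? hhead)
      hlen₂ with rfl | rfl | rfl
    · exact absurd rfl hne
    all_goals simp at hhead
  · obtain rfl : v = none := by simpa using h₁.2.2.symm
    have hlast := h₂.2.2
    rcases eq_of_none_mem_of_isChain_adjAddMid hst h₂.1.2.2 (List.mem_of_mem_getLast? hlast)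
      hlen₂ with rfl | rfl | rfl
    · simp at hlast
    · exact absurd rfl hne
    · simp at hlast
  · obtain rfl : u = some s := by simpa using h₁.2.1.symm
    obtain rfl : v = some t := by simpa using h₁.2.2.symm
    obtain ⟨q, rfl⟩ := exists_eq_map_some_of_none_notMem fun h => by simpa using hdisj none hn h
    have hq := h₂.of_map_some_adjAddMid
    refine ⟨q, hq, hq.1.2.1.mem_of_card_le_length ?_⟩
    simp only [List.length_cons, List.length_nil, List.length_map] at hsum
    omega

lemma exists_isPathFT_of_containsSpindle2 (hst : s ≠ t) {l₁ l₂ : ℕ} (hl₁ : 1 ≤ l₁)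
    (hl₂ : 1 ≤ l₂) (hsum : l₁ + l₂ = Fintype.card V + 1)
    (h : ContainsSpindle2 (adjAddMid A s t) l₁ l₂) :
    ∃ q : List V, IsPathFT A s t q ∧ ∀ x, x ∈ q := by
  classical
  obtain ⟨u, v, p₁, p₂, h₁, h₂, hlen₁, hlen₂, hne, hdisj⟩ := h
  have hn : none ∈ p₁ ∨ none ∈ p₂ := by
    by_contra! hn
    have hsub : p₁.toFinset ∪ p₂.toFinset ⊆ Finset.univ.erase none := by
      intro x
      simp only [Finset.mem_union, List.mem_toFinset, Finset.mem_erase, Finset.mem_univ, and_true]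
      rintro (hx | hx) rfl
      exacts [hn.1 hx, hn.2 hx]
    have hunion : (p₁.toFinset ∪ p₂.toFinset).card ≤ Fintype.card V := by
      simpa using
        (Finset.card_le_card hsub).trans_eq (Finset.card_erase_of_mem (Finset.mem_univ _))
    have := length_add_length_le_card_union h₁.1.2.1 h₂.1.2.1 hdisj
    omega
  rcases hn with hn | hn
  · exact exists_isPathFT_of_spindle_through_none hst h₁ h₂ (by omega) (by omega) (by omega)
      hne hdisj hn
  · exact exists_isPathFT_of_spindle_through_none hst h₂ h₁ (by omega) (by omega) (by omega)
      hne.symm (fun x hx₂ hx₁ => hdisj x hx₁ hx₂) hn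

end Spindle

theorem stmt12_general {V : Type*} [Fintype V] (A : V → V → Prop)
    (hcard : 2 ≤ Fintype.card V) (s t : V) (hst : s ≠ t) :
    (∃ p : List V, IsPathFT A s t p ∧ ∀ x : V, x ∈ p) ↔
    (∃ l1 l2, 1 ≤ l1 ∧ 1 ≤ l2 ∧ l1 + l2 = Fintype.card V + 1 ∧
      ContainsSpindle2 (adjAddMid A s t) l1 l2) := by
  constructor
  · rintro ⟨p, hp, hcover⟩
    exact ⟨Fintype.card V - 1, 2, by omega, by omega, by omega,
      containsSpindle2_adjAddMid_of_isPathFT hst hp hcover⟩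
  · rintro ⟨l1, l2, hl1, hl2, hsum, h⟩
    exact exists_isPathFT_of_containsSpindle2 hst hl1 hl2 hsum h

theorem stmt12 {V : Type*} [Fintype V] (A : V → V → Prop)
    (harc : ∀ a b, A a b → a ≠ b)
    (hcard : 2 ≤ Fintype.card V) (s t : V) (hst : s ≠ t) :
    (∃ p : List V, IsPathFT A s t p ∧ ∀ x : V, x ∈ p) ↔
    (∃ l1 l2, 1 ≤ l1 ∧ 1 ≤ l2 ∧ l1 + l2 = Fintype.card V + 1 ∧
      ContainsSpindle2 (adjAddMid A s t) l1 l2) :=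
  stmt12_general A hcard s t hst
end
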